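/- arXiv:1208.1125 — 10 statements merged into one kernel-verified Lean document; each statement's English description precedes it below -/
import Mathlib

section
/- For all x > 0, -log x + (x - 1) ≥ (3/10) · min{|x-1|, (x-1)²}. -/
set_option maxHeartbeats 1000000 in
theorem log_inequality (x : ℝ) (hx : 0 < x) :
    (3 / 10) * min |x - 1| ((x - 1) ^ 2) ≤ -Real.log x + (x - 1) := by
  have hl2 : Real.log 2 < 0.6931471808 := Real.log_two_lt_d9
  rcases le_total x 2 with hx2 | hx2
  · -- use min ≤ (x-1)^2
    have hmin : min |x - 1| ((x - 1) ^ 2) ≤ (x - 1) ^ 2 := min_le_right _ _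
    have hstep : (3/10 : ℝ) * min |x - 1| ((x - 1) ^ 2) ≤ (3/10) * (x - 1)^2 := by
      nlinarith
    refine le_trans hstep ?_
    rcases le_total x (14/10) with h14 | h14
    · -- fourth root trick
      set u := Real.sqrt (Real.sqrt x) with hu
      have hsx : 0 ≤ Real.sqrt x := Real.sqrt_nonneg x
      have hu0 : 0 < u := Real.sqrt_pos.mpr (Real.sqrt_pos.mpr hx)
      have h1 : u ^ 2 = Real.sqrt x := Real.sq_sqrt hsx
      have h2 : Real.sqrt x ^ 2 = x := Real.sq_sqrt hx.le
      have hu4 : u ^ 4 = x := by nlinarith [h1, h2]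
      have hlog : Real.log x = 4 * Real.log u := by
        rw [← hu4, Real.log_pow]; norm_num
      have hlu : Real.log u ≤ u - 1 := Real.log_le_sub_one_of_pos hu0
      have hx4 : u ^ 4 ≤ 14/10 := by rw [hu4]; exact h14
      have hu11 : u ≤ 109/100 := by nlinarith [hx4, hu0.le, sq_nonneg (u - 109/100), sq_nonneg (u + 109/100), sq_nonneg (u^2 - (109/100)^2)]
      have hb : (3/10 : ℝ) * (u^3 + u^2 + u + 1)^2 ≤ u^2 + 2*u + 3 := by
        nlinarith [hu0.le, hu11, hx4, sq_nonneg (u - 1), sq_nonneg (u^2 - 1), mul_nonneg hu0.le hu0.le, mul_nonneg (mul_nonneg hu0.le hu0.le) hu0.le, sq_nonneg (u^2 + u), mul_nonneg (sub_nonneg.mpr hu11) hu0.le]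
      have h5 : (u - 1)^2 * ((3/10 : ℝ) * (u^3 + u^2 + u + 1)^2) ≤ (u - 1)^2 * (u^2 + 2*u + 3) :=
        mul_le_mul_of_nonneg_left hb (sq_nonneg _)
      rw [hlog, ← hu4]
      nlinarith [h5, hlu]
    · rcases le_total x (17/10) with h17 | h17
      · -- tangent at 3/2
        have hpos : (0:ℝ) < 2*x/3 := by linarith
        have e1 : Real.log x = Real.log (3/2) + Real.log (2*x/3) := by
          rw [← Real.log_mul (by norm_num) (ne_of_gt hpos)]
          ring_nf
        have e2 : Real.log (2*x/3) ≤ 2*x/3 - 1 := Real.log_le_sub_one_of_pos hpos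
        have e3 : Real.log ((3/2 : ℝ)^2) = 2 * Real.log (3/2) := by
          rw [Real.log_pow]; norm_num
        have e4 : Real.log ((3/2 : ℝ)^2) = Real.log (9/8) + Real.log 2 := by
          rw [← Real.log_mul (by norm_num) (by norm_num)]; norm_num
        have e5 : Real.log (9/8 : ℝ) ≤ 1/8 := by
          have := Real.log_le_sub_one_of_pos (show (0:ℝ) < 9/8 by norm_num)
          linarith
        have L32 : Real.log (3/2 : ℝ) ≤ 0.4090735904 := by linarith
        nlinarith [e2, L32, mul_nonneg (by linarith : (0:ℝ) ≤ x - 14/10) (by linarith : (0:ℝ) ≤ 17/10 - x)]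
      · -- tangent at 2
        have hpos : (0:ℝ) < x/2 := by linarith
        have e1 : Real.log x = Real.log 2 + Real.log (x/2) := by
          rw [← Real.log_mul (by norm_num) (ne_of_gt hpos)]
          ring_nf
        have e2 : Real.log (x/2) ≤ x/2 - 1 := Real.log_le_sub_one_of_pos hpos
        nlinarith [e2, hl2, mul_nonneg (by linarith : (0:ℝ) ≤ x - 17/10) (by linarith : (0:ℝ) ≤ 2 - x)]
  · -- x ≥ 2 : use min ≤ |x-1| = x-1
    have habs : |x - 1| = x - 1 := abs_of_nonneg (by linarith)
    have hmin : min |x - 1| ((x - 1) ^ 2) ≤ x - 1 := by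
      exact (min_le_left _ _).trans (le_of_eq habs)
    have hstep : (3/10 : ℝ) * min |x - 1| ((x - 1) ^ 2) ≤ (3/10) * (x - 1) := by
      nlinarith
    refine le_trans hstep ?_
    have hpos : (0:ℝ) < x/2 := by linarith
    have e1 : Real.log x = Real.log 2 + Real.log (x/2) := by
      rw [← Real.log_mul (by norm_num) (ne_of_gt hpos)]
      ring_nf
    have e2 : Real.log (x/2) ≤ x/2 - 1 := Real.log_le_sub_one_of_pos hpos
    linarith
end

section
/- For all 0 < x ≤ 2, (x - 1) - log x ≥ (x-1)²/(2(1 + 2|x-1|/3)). -/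
/-!
Below 1 the denominator is at least 2, and `(x - 1)² / 2 ≤ x - 1 - log x` is the second partial
sum of `-log (1 - t) = ∑ tⁿ⁺¹ / (n + 1)`, whose terms are nonnegative for `t = 1 - x ≥ 0`.
Above 1 the left-hand side is `3 (x - 1)² / (4x + 2)`, so the claim is that `log x` lies below its
`[2/1]` Padé approximant `(x - 1)(x + 5) / (4x + 2)` at `1`; the gap vanishes at `x = 1` and has
derivative `4 (x - 1)³ / (x (4x + 2)²) ≥ 0`.
-/

open Real

lemma sq_sub_one_div_two_le_sub_one_sub_log {x : ℝ} (hx0 : 0 < x) (hx1 : x ≤ 1) :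
    (x - 1) ^ 2 / 2 ≤ x - 1 - log x := by
  have ht : |1 - x| < 1 := abs_lt.2 ⟨by linarith, by linarith⟩
  have ht0 : 0 ≤ 1 - x := by linarith
  have hpartial := sum_le_hasSum (Finset.range 2) (fun n _ ↦ by positivity)
    (hasSum_pow_div_log_of_abs_lt_one ht)
  norm_num [Finset.sum_range_succ] at hpartial
  linarith

lemma hasDerivAt_sub_one_sub_log_sub_pade {x : ℝ} (hx : 0 < x) :
    HasDerivAt (fun z ↦ z - 1 - log z - 3 * (z - 1) ^ 2 / (4 * z + 2))
      (4 * (x - 1) ^ 3 / (x * (4 * x + 2) ^ 2)) x := by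
  have hden : 4 * x + 2 ≠ 0 := by positivity
  have hnum : HasDerivAt (fun z ↦ 3 * (z - 1) ^ 2) (3 * (2 * (x - 1))) x := by
    simpa using (((hasDerivAt_id x).sub_const 1).pow 2).const_mul 3
  have hden' : HasDerivAt (fun z ↦ 4 * z + 2) 4 x := by
    simpa using ((hasDerivAt_id x).const_mul 4).add_const 2
  refine ((((hasDerivAt_id x).sub_const 1).sub (hasDerivAt_log hx.ne')).sub
    (hnum.div hden' hden)).congr_deriv ?_
  field_simp
  ring

lemma three_mul_sq_sub_one_div_le_sub_one_sub_log {x : ℝ} (hx : 1 ≤ x) :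
    3 * (x - 1) ^ 2 / (4 * x + 2) ≤ x - 1 - log x := by
  have hderiv : ∀ z ∈ Set.Ici (1 : ℝ), HasDerivAt
      (fun z ↦ z - 1 - log z - 3 * (z - 1) ^ 2 / (4 * z + 2))
      (4 * (z - 1) ^ 3 / (z * (4 * z + 2) ^ 2)) z :=
    fun z hz ↦ hasDerivAt_sub_one_sub_log_sub_pade (by linarith [Set.mem_Ici.1 hz])
  have hmono := monotoneOn_of_hasDerivWithinAt_nonneg (convex_Ici 1)
    (fun z hz ↦ (hderiv z hz).continuousAt.continuousWithinAt)
    (fun z hz ↦ (hderiv z (interior_subset hz)).hasDerivWithinAt)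
    (fun z hz ↦ by
      have : 0 ≤ z - 1 := by linarith [Set.mem_Ici.1 (interior_subset hz)]
      have : 0 < z := by linarith
      positivity)
  have := hmono Set.self_mem_Ici hx hx
  norm_num at this
  linarith

theorem log_inequality_refined_general (x : ℝ) (hx : 0 < x) :
    (x - 1) ^ 2 / (2 * (1 + 2 * |x - 1| / 3)) ≤ (x - 1) - Real.log x := by
  rcases le_total x 1 with hx1 | hx1
  · calc (x - 1) ^ 2 / (2 * (1 + 2 * |x - 1| / 3)) ≤ (x - 1) ^ 2 / 2 :=
          div_le_div_of_nonneg_left (sq_nonneg _) two_pos (by have := abs_nonneg (x - 1); linarith)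
      _ ≤ x - 1 - log x := sq_sub_one_div_two_le_sub_one_sub_log hx hx1
  · calc (x - 1) ^ 2 / (2 * (1 + 2 * |x - 1| / 3)) = 3 * (x - 1) ^ 2 / (4 * x + 2) := by
          rw [abs_of_nonneg (by linarith)]
          field_simp
          ring
      _ ≤ x - 1 - log x := three_mul_sq_sub_one_div_le_sub_one_sub_log hx1

theorem log_inequality_refined (x : ℝ) (hx : 0 < x) (hx2 : x ≤ 2) :
    (x - 1) ^ 2 / (2 * (1 + 2 * |x - 1| / 3)) ≤ (x - 1) - Real.log x :=
  log_inequality_refined_general x hx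
end

section
/- Let R ≥ 1 and let I ⊂ ℝ be an interval of length one. Let ρ : I → (0,∞) be integrable and satisfy ρ(λx + (1-λ)y) ≤ R[λρ(x) + (1-λ)ρ(y)] for all x, y ∈ I and 0 < λ < 1. Then for any a, b ∈ I with a < b, ∫_a^b ρ(x) dx ≤ (R/2)(ρ(a) + ρ(b)). -/
open Set MeasureTheory

/-!
On `[c, d]` the relaxed convexity condition bounds `ρ` by `R` times the chord through
`(c, ρ c)` and `(d, ρ d)`; integrating the chord gives `∫_c^d ρ ≤ R (d - c) (ρ c + ρ d) / 2`,
and `d - c ≤ 1` on an interval of length one.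
-/

def RelaxedConvexOn (R : ℝ) (s : Set ℝ) (ρ : ℝ → ℝ) : Prop :=
  ∀ x ∈ s, ∀ y ∈ s, ∀ l : ℝ, 0 < l → l < 1 →
    ρ (l * x + (1 - l) * y) ≤ R * (l * ρ x + (1 - l) * ρ y)

theorem integral_chord {c d : ℝ} (hcd : c ≠ d) (u v : ℝ) :
    ∫ x in c..d, ((d - x) * u + (x - c) * v) / (d - c) = (d - c) / 2 * (u + v) := by
  have hdc : d - c ≠ 0 := sub_ne_zero.mpr hcd.symm
  have hlin : ∀ x, ((d - x) * u + (x - c) * v) / (d - c)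
      = (v - u) / (d - c) * x + (d * u - c * v) / (d - c) := fun x => by ring
  simp only [hlin]
  rw [intervalIntegral.integral_add (intervalIntegral.intervalIntegrable_id.const_mul _)
    intervalIntegrable_const, intervalIntegral.integral_const_mul, integral_id,
    intervalIntegral.integral_const, smul_eq_mul]
  field_simp
  ring

namespace RelaxedConvexOn

variable {R : ℝ} {s : Set ℝ} {ρ : ℝ → ℝ} {c d : ℝ}

theorem le_mul_chord (h : RelaxedConvexOn R s ρ) (hc : c ∈ s) (hd : d ∈ s) :
    ∀ x ∈ Ioo c d, ρ x ≤ R * (((d - x) * ρ c + (x - c) * ρ d) / (d - c)) := by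
  rintro x ⟨hcx, hxd⟩
  have hdc : 0 < d - c := by linarith
  have hl0 : 0 < (d - x) / (d - c) := div_pos (by linarith) hdc
  have hl1 : (d - x) / (d - c) < 1 := (div_lt_one hdc).mpr (by linarith)
  have hx : (d - x) / (d - c) * c + (1 - (d - x) / (d - c)) * d = x := by
    field_simp
    ring
  have hchord : (d - x) / (d - c) * ρ c + (1 - (d - x) / (d - c)) * ρ d
      = ((d - x) * ρ c + (x - c) * ρ d) / (d - c) := by
    field_simp
    ring
  simpa only [hx, hchord] using h c hc d hd _ hl0 hl1

theorem integral_le (h : RelaxedConvexOn R s ρ) (hc : c ∈ s) (hd : d ∈ s) (hcd : c < d)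
    (hint : IntervalIntegrable ρ volume c d) :
    ∫ x in c..d, ρ x ≤ R * ((d - c) / 2 * (ρ c + ρ d)) := by
  calc ∫ x in c..d, ρ x
      ≤ ∫ x in c..d, R * (((d - x) * ρ c + (x - c) * ρ d) / (d - c)) :=
        intervalIntegral.integral_mono_on_of_le_Ioo hcd.le hint
          (Continuous.intervalIntegrable (by fun_prop) c d)
          (h.le_mul_chord hc hd)
    _ = R * ((d - c) / 2 * (ρ c + ρ d)) := by
        rw [intervalIntegral.integral_const_mul, integral_chord hcd.ne]

end RelaxedConvexOn

theorem integral_le_of_relaxed_convex (R a : ℝ) (hR : 1 ≤ R) (ρ : ℝ → ℝ)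
    (hpos : ∀ x ∈ Icc a (a + 1), 0 < ρ x)
    (hint : IntegrableOn ρ (Icc a (a + 1)))
    (hconv : ∀ x ∈ Icc a (a + 1), ∀ y ∈ Icc a (a + 1), ∀ l : ℝ, 0 < l → l < 1 →
      ρ (l * x + (1 - l) * y) ≤ R * (l * ρ x + (1 - l) * ρ y)) :
    ∀ c ∈ Icc a (a + 1), ∀ d ∈ Icc a (a + 1), c < d →
      ∫ x in c..d, ρ x ≤ R / 2 * (ρ c + ρ d) := by
  intro c hc d hd hcd
  have hint_cd : IntervalIntegrable ρ volume c d :=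
    (intervalIntegrable_iff_integrableOn_Icc_of_le hcd.le).mpr
      (hint.mono_set (Icc_subset_Icc hc.1 hd.2))
  have hchord_nonneg : 0 ≤ R * (ρ c + ρ d) :=
    mul_nonneg (by linarith) (add_pos (hpos c hc) (hpos d hd)).le
  have hlen : d - c ≤ 1 := by linarith [hc.1, hd.2]
  calc ∫ x in c..d, ρ x
      ≤ R * ((d - c) / 2 * (ρ c + ρ d)) :=
        RelaxedConvexOn.integral_le hconv hc hd hcd hint_cd
    _ ≤ R / 2 * (ρ c + ρ d) := by nlinarith
end

section
/- Let R ≥ 1 and I ⊂ ℝ an interval of length one. Let ρ : I → (0,∞) be integrable with ρ(λx+(1-λ)y) ≤ R[λρ(x)+(1-λ)ρ(y)] for all x,y ∈ I, 0 < λ < 1. Then for any absolutely continuous f : closure(I) → ℝ with f vanishing on the endpoints of I, ∫_I Λ(f) ρ ≤ (4/3) R² ∫_I Λ(f') ρ, where Λ(t) = min{|t|, t²}. -/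
/-!
Write `Λ t = min |t| t²`. For `x` in the interval, `f x = ∫_a^x f' = -∫_x^b f'`. Splitting
`|f'| = min (|f'|, 1) + max (|f'| - 1, 0)` and applying Cauchy–Schwarz to the first part on a
subinterval of length at most one gives `Λ (f x) ≤ 4/3 ∫ Λ (f')` over either side of `x`.
Relaxed convexity gives `ρ x ≤ R (ρ t + ρ u)` for `t ≤ x ≤ u`; integrating this against
`Λ (f' t) Λ (f' u)` shows that `ρ x` times the smaller one-sided integral of `Λ (f')` is at most
`R ∫ Λ (f') ρ`. So `Λ (f x) ρ x ≤ 4/3 R ∫ Λ (f') ρ` pointwise, and integrating over the unit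
interval gives the claim because `R ≤ R²`.
-/

open Set MeasureTheory

/-- The function `Λ` of the paper. -/
def minAbsSq (t : ℝ) : ℝ := min |t| (t ^ 2)

lemma minAbsSq_nonneg (t : ℝ) : 0 ≤ minAbsSq t := le_min (abs_nonneg t) (sq_nonneg t)

lemma abs_minAbsSq_le (t : ℝ) : |minAbsSq t| ≤ |t| := by
  rw [abs_of_nonneg (minAbsSq_nonneg t)]
  exact min_le_left _ _

@[simp] lemma minAbsSq_neg (t : ℝ) : minAbsSq (-t) = minAbsSq t := by simp [minAbsSq]

lemma continuous_minAbsSq : Continuous minAbsSq := by unfold minAbsSq; fun_prop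

lemma minAbsSq_le_of_abs_le_add {p q v : ℝ} (hq : 0 ≤ q) (hv : |v| ≤ p + q) :
    minAbsSq v ≤ 4 / 3 * (p ^ 2 + q) := by
  rcases le_or_gt (p + q) 1 with h1 | h1
  · calc minAbsSq v ≤ v ^ 2 := min_le_right _ _
      _ = |v| ^ 2 := (sq_abs v).symm
      _ ≤ (p + q) ^ 2 := by gcongr
      _ ≤ 4 / 3 * (p ^ 2 + q) := by
        nlinarith [sq_nonneg (2 * p - 1), mul_nonneg hq (sub_nonneg.2 h1), sq_nonneg (p - q)]
  · calc minAbsSq v ≤ |v| := min_le_left _ _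
      _ ≤ p + q := hv
      _ ≤ 4 / 3 * (p ^ 2 + q) := by nlinarith [sq_nonneg (2 * p - 1)]

lemma min_abs_one_add_max_abs_sub_one (t : ℝ) : min |t| 1 + max (|t| - 1) 0 = |t| := by
  rcases le_total |t| 1 with h | h
  · rw [min_eq_left h, max_eq_right (by linarith), add_zero]
  · rw [min_eq_right h, max_eq_left (by linarith)]; ring

lemma sq_min_abs_one_add_max_abs_sub_one (t : ℝ) :
    min |t| 1 ^ 2 + max (|t| - 1) 0 = minAbsSq t := by
  have h := sq_abs t
  rcases le_total |t| 1 with h1 | h1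
  · rw [min_eq_left h1, max_eq_right (by linarith), minAbsSq,
      min_eq_right (by nlinarith [abs_nonneg t])]
    linarith
  · rw [min_eq_right h1, max_eq_left (by linarith), minAbsSq, min_eq_left (by nlinarith)]
    ring

theorem MeasureTheory.Integrable.comp_of_abs_le {α : Type*} [MeasurableSpace α] {μ : Measure α}
    {g : α → ℝ} {φ : ℝ → ℝ} (hφ : Continuous φ) (hle : ∀ t, |φ t| ≤ |t|) (hg : Integrable g μ) :
    Integrable (fun x => φ (g x)) μ :=
  hg.mono (hφ.comp_aestronglyMeasurable hg.1) (ae_of_all _ fun x => hle (g x))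

theorem IntervalIntegrable.minAbsSq_comp {a b : ℝ} {μ : Measure ℝ} {g : ℝ → ℝ}
    (hg : IntervalIntegrable g μ a b) : IntervalIntegrable (fun t => minAbsSq (g t)) μ a b :=
  ⟨hg.1.comp_of_abs_le continuous_minAbsSq abs_minAbsSq_le,
    hg.2.comp_of_abs_le continuous_minAbsSq abs_minAbsSq_le⟩

theorem sq_integral_le_integral_sq {α : Type*} [MeasurableSpace α] {μ : Measure α}
    (hμ : μ univ ≤ 1) {h : α → ℝ} (hh : Integrable h μ) (hh2 : Integrable (fun x => h x ^ 2) μ) :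
    (∫ x, h x ∂μ) ^ 2 ≤ ∫ x, h x ^ 2 ∂μ := by
  have : IsFiniteMeasure μ := ⟨hμ.trans_lt ENNReal.one_lt_top⟩
  set p := ∫ x, h x ∂μ
  have hvol : μ.real univ ≤ 1 := ENNReal.toReal_le_of_le_ofReal zero_le_one (by simpa using hμ)
  -- Integrate `h² ≥ 2ph - p²`; the constant term costs `p² μ(univ) ≤ p²`.
  have hmono : ∫ x, (2 * p * h x - p ^ 2) ∂μ ≤ ∫ x, h x ^ 2 ∂μ :=
    integral_mono ((hh.const_mul _).sub (integrable_const _)) hh2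
      fun x => by nlinarith [sq_nonneg (h x - p)]
  rw [integral_sub (hh.const_mul _) (integrable_const _), integral_const_mul, integral_const,
    smul_eq_mul] at hmono
  nlinarith [sq_nonneg p]

theorem minAbsSq_integral_le {α : Type*} [MeasurableSpace α] {μ : Measure α}
    (hμ : μ univ ≤ 1) {g : α → ℝ} (hg : Integrable g μ) :
    minAbsSq (∫ x, g x ∂μ) ≤ 4 / 3 * ∫ x, minAbsSq (g x) ∂μ := by
  have hmin : Integrable (fun x => min |g x| 1) μ :=
    hg.comp_of_abs_le (φ := fun t => min |t| 1) (by fun_prop) fun t => by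
      rw [abs_of_nonneg (by positivity)]; exact min_le_left _ _
  have hmin2 : Integrable (fun x => min |g x| 1 ^ 2) μ :=
    hg.comp_of_abs_le (φ := fun t => min |t| 1 ^ 2) (by fun_prop) fun t => by
      have h0 : 0 ≤ min |t| 1 := by positivity
      rw [abs_of_nonneg (by positivity)]
      nlinarith [min_le_left |t| 1, min_le_right |t| 1]
  have hmax : Integrable (fun x => max (|g x| - 1) 0) μ :=
    hg.comp_of_abs_le (φ := fun t => max (|t| - 1) 0) (by fun_prop) fun t => by
      rw [abs_of_nonneg (le_max_right _ _), max_le_iff]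
      exact ⟨by linarith, abs_nonneg t⟩
  have habs : |∫ x, g x ∂μ| ≤ (∫ x, min |g x| 1 ∂μ) + ∫ x, max (|g x| - 1) 0 ∂μ := by
    rw [← integral_add hmin hmax]
    simp only [min_abs_one_add_max_abs_sub_one]
    exact abs_integral_le_integral_abs
  calc minAbsSq (∫ x, g x ∂μ)
      ≤ 4 / 3 * ((∫ x, min |g x| 1 ∂μ) ^ 2 + ∫ x, max (|g x| - 1) 0 ∂μ) :=
        minAbsSq_le_of_abs_le_add (integral_nonneg fun x => le_max_right _ _) habs
    _ ≤ 4 / 3 * ((∫ x, min |g x| 1 ^ 2 ∂μ) + ∫ x, max (|g x| - 1) 0 ∂μ) := by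
        gcongr; exact sq_integral_le_integral_sq hμ hmin hmin2
    _ = 4 / 3 * ∫ x, minAbsSq (g x) ∂μ := by
        rw [← integral_add hmin2 hmax]
        simp only [sq_min_abs_one_add_max_abs_sub_one]

theorem minAbsSq_intervalIntegral_le {a b : ℝ} {g : ℝ → ℝ} (hab : a ≤ b) (hba : b - a ≤ 1)
    (hg : IntervalIntegrable g volume a b) :
    minAbsSq (∫ t in a..b, g t) ≤ 4 / 3 * ∫ t in a..b, minAbsSq (g t) := by
  simp only [intervalIntegral.integral_of_le hab]
  refine minAbsSq_integral_le ?_ hg.1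
  rw [Measure.restrict_apply_univ, Real.volume_Ioc]
  exact ENNReal.ofReal_le_one.2 hba

theorem RelaxedConvexOn.le_mul_add {R : ℝ} {s : Set ℝ} {ρ : ℝ → ℝ} {t x u : ℝ}
    (hρ : RelaxedConvexOn R s ρ) (hR : 1 ≤ R) (ht : t ∈ s) (hu : u ∈ s)
    (hρt : 0 ≤ ρ t) (hρu : 0 ≤ ρ u) (htx : t ≤ x) (hxu : x ≤ u) :
    ρ x ≤ R * (ρ t + ρ u) := by
  rcases htx.eq_or_lt with rfl | htx
  · nlinarith
  rcases hxu.eq_or_lt with rfl | hxu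
  · nlinarith
  have hut : 0 < u - t := by linarith
  set l := (u - x) / (u - t)
  have hl0 : 0 < l := div_pos (by linarith) hut
  have hl1 : l < 1 := (div_lt_one hut).2 (by linarith)
  have hx : l * t + (1 - l) * u = x := by simp only [l]; field_simp; ring
  calc ρ x = ρ (l * t + (1 - l) * u) := by rw [hx]
    _ ≤ R * (l * ρ t + (1 - l) * ρ u) := hρ t ht u hu l hl0 hl1
    _ ≤ R * (ρ t + ρ u) := by gcongr <;> nlinarith

theorem RelaxedConvexOn.intervalIntegrable_mul {R a b : ℝ} {ρ g : ℝ → ℝ}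
    (hρ : RelaxedConvexOn R (Icc a b) ρ) (hR : 1 ≤ R) (hρ0 : ∀ x ∈ Icc a b, 0 ≤ ρ x)
    (hρm : AEStronglyMeasurable ρ (volume.restrict (Icc a b))) (hab : a ≤ b)
    (hg : IntervalIntegrable g volume a b) :
    IntervalIntegrable (fun t => g t * ρ t) volume a b := by
  rw [intervalIntegrable_iff_integrableOn_Icc_of_le hab] at hg ⊢
  refine hg.mul_bdd hρm (c := R * (ρ a + ρ b)) ?_
  refine ae_restrict_of_forall_mem measurableSet_Icc fun x hx => ?_
  rw [Real.norm_of_nonneg (hρ0 x hx)]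
  exact hρ.le_mul_add hR (left_mem_Icc.2 hab) (right_mem_Icc.2 hab)
    (hρ0 a (left_mem_Icc.2 hab)) (hρ0 b (right_mem_Icc.2 hab)) hx.1 hx.2

theorem mul_intervalIntegral_le_of_le_mul_add {a b c d r : ℝ} {ρ w : ℝ → ℝ} (hab : a ≤ b)
    (hw0 : ∀ t ∈ Icc a b, 0 ≤ w t) (hw : IntervalIntegrable w volume a b)
    (hwρ : IntervalIntegrable (fun t => w t * ρ t) volume a b)
    (h : ∀ t ∈ Icc a b, c ≤ r * ρ t + d) :
    c * ∫ t in a..b, w t ≤ r * (∫ t in a..b, w t * ρ t) + d * ∫ t in a..b, w t := by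
  rw [← intervalIntegral.integral_const_mul, ← intervalIntegral.integral_const_mul,
    ← intervalIntegral.integral_const_mul, ← intervalIntegral.integral_add (hwρ.const_mul r)
      (hw.const_mul d)]
  refine intervalIntegral.integral_mono_on hab (hw.const_mul c)
    ((hwρ.const_mul r).add (hw.const_mul d)) fun t ht => ?_
  nlinarith [h t ht, hw0 t ht]

lemma mul_min_le_of_mul_mul_le {c A B P Q R : ℝ} (hA : 0 ≤ A) (hB : 0 ≤ B) (hP : 0 ≤ P)
    (hQ : 0 ≤ Q) (hR : 0 ≤ R) (h : c * A * B ≤ R * (P * B + A * Q)) :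
    c * min A B ≤ R * (P + Q) := by
  rcases le_total A B with hAB | hBA
  · rw [min_eq_left hAB]
    rcases hB.eq_or_lt with rfl | hB
    · rw [le_antisymm hAB hA, mul_zero]; positivity
    · refine le_of_mul_le_mul_right ?_ hB
      nlinarith [mul_le_mul_of_nonneg_left hAB (mul_nonneg hR hQ)]
  · rw [min_eq_right hBA]
    rcases hA.eq_or_lt with rfl | hA
    · rw [le_antisymm hBA hB, mul_zero]; positivity
    · refine le_of_mul_le_mul_right ?_ hA
      nlinarith [mul_le_mul_of_nonneg_left hBA (mul_nonneg hR hP)]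

theorem RelaxedConvexOn.mul_min_integral_le {R a b x : ℝ} {ρ w : ℝ → ℝ}
    (hρ : RelaxedConvexOn R (Icc a b) ρ) (hR : 1 ≤ R) (hρ0 : ∀ x ∈ Icc a b, 0 ≤ ρ x)
    (hw0 : ∀ t, 0 ≤ w t) (hw : IntervalIntegrable w volume a b)
    (hwρ : IntervalIntegrable (fun t => w t * ρ t) volume a b) (hx : x ∈ Icc a b) :
    ρ x * min (∫ t in a..x, w t) (∫ t in x..b, w t) ≤ R * ∫ t in a..b, w t * ρ t := by
  have hxab : x ∈ uIcc a b := Icc_subset_uIcc hx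
  have hsubL := uIcc_subset_uIcc_left hxab
  have hsubR := uIcc_subset_uIcc_right hxab
  have hleft : ∀ t ∈ Icc a x, t ∈ Icc a b := fun t ht => ⟨ht.1, ht.2.trans hx.2⟩
  have hright : ∀ u ∈ Icc x b, u ∈ Icc a b := fun u hu => ⟨hx.1.trans hu.1, hu.2⟩
  set A := ∫ t in a..x, w t
  set B := ∫ t in x..b, w t
  set P := ∫ t in a..x, w t * ρ t
  set Q := ∫ t in x..b, w t * ρ t
  have hinner : ∀ u ∈ Icc x b, ρ x * A - R * P ≤ R * A * ρ u + 0 := fun u hu => by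
    have := mul_intervalIntegral_le_of_le_mul_add hx.1 (fun t _ => hw0 t) (hw.mono_set hsubL)
      (hwρ.mono_set hsubL) fun t ht => (hρ.le_mul_add hR (hleft t ht) (hright u hu)
        (hρ0 t (hleft t ht)) (hρ0 u (hright u hu)) ht.2 hu.1).trans_eq (mul_add R _ _)
    linarith
  have houter := mul_intervalIntegral_le_of_le_mul_add hx.2 (fun t _ => hw0 t)
    (hw.mono_set hsubR) (hwρ.mono_set hsubR) hinner
  rw [← intervalIntegral.integral_add_adjacent_intervals (hwρ.mono_set hsubL)
    (hwρ.mono_set hsubR)]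
  refine mul_min_le_of_mul_mul_le (intervalIntegral.integral_nonneg hx.1 fun t _ => hw0 t)
    (intervalIntegral.integral_nonneg hx.2 fun t _ => hw0 t)
    (intervalIntegral.integral_nonneg hx.1 fun t ht => mul_nonneg (hw0 t) (hρ0 t (hleft t ht)))
    (intervalIntegral.integral_nonneg hx.2 fun t ht => mul_nonneg (hw0 t) (hρ0 t (hright t ht)))
    (by linarith) ?_
  linarith

theorem RelaxedConvexOn.minAbsSq_integral_mul_le {R a b x : ℝ} {ρ g : ℝ → ℝ}
    (hρ : RelaxedConvexOn R (Icc a b) ρ) (hR : 1 ≤ R) (hρ0 : ∀ x ∈ Icc a b, 0 ≤ ρ x)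
    (hba : b - a ≤ 1) (hg : IntervalIntegrable g volume a b)
    (hgρ : IntervalIntegrable (fun t => minAbsSq (g t) * ρ t) volume a b)
    (hg0 : ∫ t in a..b, g t = 0) (hx : x ∈ Icc a b) :
    minAbsSq (∫ t in a..x, g t) * ρ x ≤ 4 / 3 * R * ∫ t in a..b, minAbsSq (g t) * ρ t := by
  have hxab : x ∈ uIcc a b := Icc_subset_uIcc hx
  have hsubL := uIcc_subset_uIcc_left hxab
  have hsubR := uIcc_subset_uIcc_right hxab
  have hleft := minAbsSq_intervalIntegral_le hx.1 (by linarith [hx.2]) (hg.mono_set hsubL)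
  have hright : minAbsSq (∫ t in a..x, g t) ≤ 4 / 3 * ∫ t in x..b, minAbsSq (g t) := by
    have hsplit := intervalIntegral.integral_add_adjacent_intervals (hg.mono_set hsubL)
      (hg.mono_set hsubR)
    rw [show ∫ t in a..x, g t = -∫ t in x..b, g t by linarith, minAbsSq_neg]
    exact minAbsSq_intervalIntegral_le hx.2 (by linarith [hx.1]) (hg.mono_set hsubR)
  have hmin : minAbsSq (∫ t in a..x, g t) ≤
      4 / 3 * min (∫ t in a..x, minAbsSq (g t)) (∫ t in x..b, minAbsSq (g t)) := by
    rw [mul_min_of_nonneg _ _ (by norm_num)]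
    exact le_min hleft hright
  calc minAbsSq (∫ t in a..x, g t) * ρ x
      ≤ 4 / 3 * min (∫ t in a..x, minAbsSq (g t)) (∫ t in x..b, minAbsSq (g t)) * ρ x := by
        gcongr; exact hρ0 x hx
    _ = 4 / 3 * (ρ x * min (∫ t in a..x, minAbsSq (g t)) (∫ t in x..b, minAbsSq (g t))) := by
        ring
    _ ≤ 4 / 3 * (R * ∫ t in a..b, minAbsSq (g t) * ρ t) := by
        have := hρ.mul_min_integral_le hR hρ0 (fun t => minAbsSq_nonneg (g t)) hg.minAbsSq_comp
          hgρ hx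
        linarith
    _ = 4 / 3 * R * ∫ t in a..b, minAbsSq (g t) * ρ t := by ring

theorem poincare_type_inequality_general (R a : ℝ) (hR : 1 ≤ R) (ρ : ℝ → ℝ)
    (hpos : ∀ x ∈ Icc a (a + 1), 0 < ρ x)
    (hint : IntegrableOn ρ (Icc a (a + 1)))
    (hconv : ∀ x ∈ Icc a (a + 1), ∀ y ∈ Icc a (a + 1), ∀ l : ℝ, 0 < l → l < 1 →
      ρ (l * x + (1 - l) * y) ≤ R * (l * ρ x + (1 - l) * ρ y))
    (f f' : ℝ → ℝ)
    (hf'int : IntegrableOn f' (Icc a (a + 1)))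
    (hfrep : ∀ x ∈ Icc a (a + 1), f x = ∫ t in a..x, f' t)
    (hfb : f (a + 1) = 0) :
    ∫ x in a..(a + 1), min |f x| ((f x) ^ 2) * ρ x ≤
      (4 / 3) * R ^ 2 * ∫ x in a..(a + 1), min |f' x| ((f' x) ^ 2) * ρ x := by
  show ∫ x in a..(a + 1), minAbsSq (f x) * ρ x ≤
    4 / 3 * R ^ 2 * ∫ x in a..(a + 1), minAbsSq (f' x) * ρ x
  have hab : a ≤ a + 1 := by linarith
  have hρ0 : ∀ x ∈ Icc a (a + 1), 0 ≤ ρ x := fun x hx => (hpos x hx).le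
  have hf' : IntervalIntegrable f' volume a (a + 1) :=
    (intervalIntegrable_iff_integrableOn_Icc_of_le hab).2 hf'int
  have hwρ := RelaxedConvexOn.intervalIntegrable_mul hconv hR hρ0 hint.aestronglyMeasurable hab
    hf'.minAbsSq_comp
  have hE : 0 ≤ ∫ x in a..(a + 1), minAbsSq (f' x) * ρ x :=
    intervalIntegral.integral_nonneg hab fun t ht => mul_nonneg (minAbsSq_nonneg _) (hρ0 t ht)
  have hbound : ∀ x ∈ uIoc a (a + 1), ‖minAbsSq (f x) * ρ x‖ ≤
      4 / 3 * R * ∫ x in a..(a + 1), minAbsSq (f' x) * ρ x := fun x hx => by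
    have hxI : x ∈ Icc a (a + 1) := Ioc_subset_Icc_self (by rwa [uIoc_of_le hab] at hx)
    rw [Real.norm_of_nonneg (mul_nonneg (minAbsSq_nonneg _) (hρ0 x hxI)), hfrep x hxI]
    exact RelaxedConvexOn.minAbsSq_integral_mul_le hconv hR hρ0 (by simp) hf' hwρ
      ((hfrep _ (right_mem_Icc.2 hab)).symm.trans hfb) hxI
  calc ∫ x in a..(a + 1), minAbsSq (f x) * ρ x
      ≤ 4 / 3 * R * (∫ x in a..(a + 1), minAbsSq (f' x) * ρ x) * |a + 1 - a| :=
        (Real.le_norm_self _).trans (intervalIntegral.norm_integral_le_of_norm_le_const hbound)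
    _ ≤ 4 / 3 * R ^ 2 * ∫ x in a..(a + 1), minAbsSq (f' x) * ρ x := by
        rw [add_sub_cancel_left, abs_one, mul_one]
        gcongr
        nlinarith

theorem poincare_type_inequality (R a : ℝ) (hR : 1 ≤ R) (ρ : ℝ → ℝ)
    (hpos : ∀ x ∈ Icc a (a + 1), 0 < ρ x)
    (hint : IntegrableOn ρ (Icc a (a + 1)))
    (hconv : ∀ x ∈ Icc a (a + 1), ∀ y ∈ Icc a (a + 1), ∀ l : ℝ, 0 < l → l < 1 →
      ρ (l * x + (1 - l) * y) ≤ R * (l * ρ x + (1 - l) * ρ y))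
    (f f' : ℝ → ℝ)
    (hf'int : IntegrableOn f' (Icc a (a + 1)))
    (hfrep : ∀ x ∈ Icc a (a + 1), f x = ∫ t in a..x, f' t)
    (hfa : f a = 0) (hfb : f (a + 1) = 0) :
    ∫ x in a..(a + 1), min |f x| ((f x) ^ 2) * ρ x ≤
      (4 / 3) * R ^ 2 * ∫ x in a..(a + 1), min |f' x| ((f' x) ^ 2) * ρ x :=
  poincare_type_inequality_general R a hR ρ hpos hint hconv f f' hf'int hfrep hfb
end

section
/- Let h : I → ℝ be twice differentiable on an interval I of length at most one with h''(t) ≤ M for all t ∈ I, M ≥ 0. Then for all a, b ∈ I and 0 < λ < 1, exp(-h(λa + (1-λ)b)) ≤ exp(M/8)·[λ·exp(-h(a)) + (1-λ)·exp(-h(b))]. -/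
open Set

theorem exp_relaxed_convexity (p q M : ℝ) (hpq : p ≤ q) (hlen : q - p ≤ 1)
    (hM : 0 ≤ M) (h h' h'' : ℝ → ℝ)
    (hd1 : ∀ t ∈ Icc p q, HasDerivWithinAt h (h' t) (Icc p q) t)
    (hd2 : ∀ t ∈ Icc p q, HasDerivWithinAt h' (h'' t) (Icc p q) t)
    (hbd : ∀ t ∈ Icc p q, h'' t ≤ M) :
    ∀ a ∈ Icc p q, ∀ b ∈ Icc p q, ∀ l : ℝ, 0 < l → l < 1 →
      Real.exp (-h (l * a + (1 - l) * b)) ≤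
        Real.exp (M / 8) * (l * Real.exp (-h a) + (1 - l) * Real.exp (-h b)) := by
  intro a ha b hb l hl0 hl1
  set g : ℝ → ℝ := fun t => h t - M / 2 * t ^ 2 with hg
  have hio : Ioo p q ⊆ Icc p q := Ioo_subset_Icc_self
  have hgconc : ConcaveOn ℝ (Icc p q) g := by
    apply concaveOn_of_hasDerivWithinAt2_nonpos (f' := fun t => h' t - M * t)
      (f'' := fun t => h'' t - M) (convex_Icc p q)
    · exact fun t ht => ((hd1 t ht).continuousWithinAt).sub
        ((continuous_const.mul (continuous_pow 2)).continuousWithinAt)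
    · intro t ht
      rw [interior_Icc] at ht ⊢
      exact ((hd1 t (hio ht)).mono hio).sub
        (((hasDerivAt_pow 2 t).const_mul (M/2)).hasDerivWithinAt.congr_deriv (by ring))
    · intro t ht
      rw [interior_Icc] at ht ⊢
      exact ((hd2 t (hio ht)).mono hio).sub
        (((hasDerivAt_id t).const_mul M).hasDerivWithinAt.congr_deriv (mul_one M))
    · intro t ht
      rw [interior_Icc] at ht
      have := hbd t (hio ht); linarith
  set x := l * a + (1 - l) * b with hx
  have hkey : l • g a + (1 - l) • g b ≤ g (l • a + (1 - l) • b) :=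
    hgconc.2 ha hb hl0.le (by linarith) (by ring)
  simp only [smul_eq_mul, hg] at hkey
  have hab2 : (a - b) ^ 2 ≤ 1 := by
    obtain ⟨ha1, ha2⟩ := ha; obtain ⟨hb1, hb2⟩ := hb
    nlinarith
  have hbound : -h x ≤ l * (-h a) + (1 - l) * (-h b) + M / 8 := by
    have h2 : l * (1 - l) * (a - b) ^ 2 ≤ 1 / 4 := by
      nlinarith [sq_nonneg (2 * l - 1), sq_nonneg (a - b), mul_pos hl0 (sub_pos.mpr hl1)]
    have h1 : M / 2 * (l * (1 - l) * (a - b) ^ 2) ≤ M / 8 := by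
      nlinarith [mul_le_mul_of_nonneg_left h2 hM]
    nlinarith [hkey]
  calc Real.exp (-h x) ≤ Real.exp (M / 8 + (l * (-h a) + (1 - l) * (-h b))) := by
        apply Real.exp_le_exp.mpr; linarith
    _ = Real.exp (M / 8) * Real.exp (l * (-h a) + (1 - l) * (-h b)) := Real.exp_add _ _
    _ ≤ Real.exp (M / 8) * (l * Real.exp (-h a) + (1 - l) * Real.exp (-h b)) := by
        apply mul_le_mul_of_nonneg_left _ (Real.exp_pos _).le
        have := convexOn_exp.2 (mem_univ (-h a)) (mem_univ (-h b)) hl0.le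
          (by linarith : (0:ℝ) ≤ 1 - l) (by ring)
        simpa using this
end

section
/- Let ψ : Q → ℝ be convex on a cube Q = [0,1]^n (with respect to full convexity on Q) with ∂²ψ/∂x_i² ≤ M for each i = 1,…,n at every point of Q, for some M ≥ 0. Then f = exp(-ψ) satisfies f(λx + (1-λ)y) ≤ e^{M/8}[λf(x) + (1-λ)f(y)] for all 0 < λ < 1 and all x, y ∈ Q such that x - y is proportional to a standard unit vector. -/
/-! Along the segment from `x` to `y`, `ψ` is a function `g` of the single coordinate `t` that
varies, with `g'' ≤ M`. Hence `M t² / 2 - g` is convex, so `g` lies above its chords up to the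
defect `M/2 · λ(1-λ)(a-b)² ≤ M/8` between `a, b ∈ [0,1]`. Applying the decreasing map `exp (-·)`
and then the convexity of `exp` gives the claim. -/

open Set

lemma convexOn_half_mul_sq_sub_of_hasDerivWithinAt2_le {D : Set ℝ} (hD : Convex ℝ D)
    {g g' g'' : ℝ → ℝ} {M : ℝ}
    (hg : ∀ t ∈ D, HasDerivWithinAt g (g' t) D t)
    (hg' : ∀ t ∈ D, HasDerivWithinAt g' (g'' t) D t)
    (hM : ∀ t ∈ D, g'' t ≤ M) :
    ConvexOn ℝ D (fun t => M / 2 * t ^ 2 - g t) := by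
  have hsq : ∀ t, HasDerivAt (fun s : ℝ => M / 2 * s ^ 2) (M * t) t := fun t =>
    ((hasDerivAt_pow 2 t).const_mul (M / 2)).congr_deriv (by push_cast; ring)
  refine convexOn_of_hasDerivWithinAt2_nonneg hD (f' := fun t => M * t - g' t)
    (f'' := fun t => M - g'' t) ?_ (fun t ht => ?_) (fun t ht => ?_)
    (fun t ht => sub_nonneg.2 (hM t (interior_subset ht)))
  · exact fun t ht => ((hsq t).continuousAt.continuousWithinAt).sub (hg t ht).continuousWithinAt
  · exact ((hsq t).hasDerivWithinAt.fun_sub (hg t (interior_subset ht))).mono interior_subset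
  · exact (((hasDerivAt_const_mul M).hasDerivWithinAt.fun_sub
      (hg' t (interior_subset ht))).mono interior_subset)

lemma le_of_convexOn_half_mul_sq_sub {D : Set ℝ} {g : ℝ → ℝ} {M a b l : ℝ}
    (hg : ConvexOn ℝ D (fun t => M / 2 * t ^ 2 - g t)) (ha : a ∈ D) (hb : b ∈ D)
    (hl₀ : 0 ≤ l) (hl₁ : l ≤ 1) :
    l * g a + (1 - l) * g b - M / 2 * (l * (1 - l) * (a - b) ^ 2) ≤ g (l * a + (1 - l) * b) := by
  have := hg.2 ha hb hl₀ (sub_nonneg.2 hl₁) (add_sub_cancel l 1)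
  simp only [smul_eq_mul] at this
  linarith

lemma mul_one_sub_mul_sq_sub_le_quarter {a b l : ℝ} (ha : a ∈ Icc (0 : ℝ) 1)
    (hb : b ∈ Icc (0 : ℝ) 1) : l * (1 - l) * (a - b) ^ 2 ≤ 1 / 4 := by
  have hab : (a - b) ^ 2 ≤ 1 := by nlinarith [ha.1, ha.2, hb.1, hb.2]
  have hl : l * (1 - l) ≤ 1 / 4 := by nlinarith [sq_nonneg (2 * l - 1)]
  nlinarith [sq_nonneg (a - b)]

lemma exp_neg_le_exp_mul_of_sub_le {u v w c l : ℝ} (hl₀ : 0 ≤ l) (hl₁ : l ≤ 1)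
    (h : l * u + (1 - l) * v - c ≤ w) :
    Real.exp (-w) ≤ Real.exp c * (l * Real.exp (-u) + (1 - l) * Real.exp (-v)) := by
  have hexp := convexOn_exp.2 (mem_univ (-u)) (mem_univ (-v)) hl₀ (sub_nonneg.2 hl₁)
    (add_sub_cancel l 1)
  simp only [smul_eq_mul] at hexp
  calc Real.exp (-w) ≤ Real.exp (c + (l * -u + (1 - l) * -v)) := Real.exp_le_exp.2 (by linarith)
    _ = Real.exp c * Real.exp (l * -u + (1 - l) * -v) := Real.exp_add _ _
    _ ≤ Real.exp c * (l * Real.exp (-u) + (1 - l) * Real.exp (-v)) :=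
      mul_le_mul_of_nonneg_left hexp (Real.exp_pos c).le

lemma update_mem_Icc_zero_one {ι : Type*} [DecidableEq ι] {x : ι → ℝ} {t : ℝ} (i : ι)
    (hx : x ∈ Icc (0 : ι → ℝ) 1) (ht : t ∈ Icc (0 : ℝ) 1) :
    Function.update x i t ∈ Icc (0 : ι → ℝ) 1 :=
  ⟨le_update_iff.2 ⟨ht.1, fun j _ => hx.1 j⟩, update_le_iff.2 ⟨ht.2, fun j _ => hx.2 j⟩⟩

lemma smul_add_one_sub_smul_eq_update {ι : Type*} [DecidableEq ι] {x y : ι → ℝ} {i : ι}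
    (hxy : ∀ j, j ≠ i → x j = y j) (l : ℝ) :
    l • x + (1 - l) • y = Function.update x i (l * x i + (1 - l) * y i) := by
  refine (Function.update_eq_iff.2 ⟨rfl, fun j hj => ?_⟩).symm
  simp only [Pi.add_apply, Pi.smul_apply, smul_eq_mul, hxy j hj]
  ring

theorem density_relaxed_convex_of_bounded_pure_second_derivatives_general
    (n : ℕ) (M : ℝ) (hM : 0 ≤ M) (ψ : (Fin n → ℝ) → ℝ)
    (ψ' ψ'' : (Fin n → ℝ) → Fin n → ℝ)
    (hd1 : ∀ x ∈ Icc (0 : Fin n → ℝ) 1, ∀ i : Fin n,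
      HasDerivWithinAt (fun t => ψ (Function.update x i t)) (ψ' x i) (Icc 0 1) (x i))
    (hd2 : ∀ x ∈ Icc (0 : Fin n → ℝ) 1, ∀ i : Fin n,
      HasDerivWithinAt (fun t => ψ' (Function.update x i t) i) (ψ'' x i) (Icc 0 1) (x i))
    (hbd : ∀ x ∈ Icc (0 : Fin n → ℝ) 1, ∀ i : Fin n, ψ'' x i ≤ M) :
    ∀ x ∈ Icc (0 : Fin n → ℝ) 1, ∀ y ∈ Icc (0 : Fin n → ℝ) 1,
      (∃ i : Fin n, ∀ j : Fin n, j ≠ i → x j = y j) →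
      ∀ l : ℝ, 0 < l → l < 1 →
        Real.exp (-ψ (l • x + (1 - l) • y)) ≤
          Real.exp (M / 8) *
            (l * Real.exp (-ψ x) + (1 - l) * Real.exp (-ψ y)) := by
  intro x hx y hy ⟨i, hxy⟩ l hl₀ hl₁
  have hxi : x i ∈ Icc (0 : ℝ) 1 := ⟨hx.1 i, hx.2 i⟩
  have hyi : y i ∈ Icc (0 : ℝ) 1 := ⟨hy.1 i, hy.2 i⟩
  have hline : ∀ t ∈ Icc (0 : ℝ) 1, Function.update x i t ∈ Icc (0 : Fin n → ℝ) 1 :=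
    fun t ht => update_mem_Icc_zero_one i hx ht
  have hconvex : ConvexOn ℝ (Icc 0 1) (fun t => M / 2 * t ^ 2 - ψ (Function.update x i t)) := by
    refine convexOn_half_mul_sq_sub_of_hasDerivWithinAt2_le (convex_Icc 0 1)
      (g' := fun t => ψ' (Function.update x i t) i) (fun t ht => ?_) (fun t ht => ?_)
      (fun t ht => hbd _ (hline t ht) i)
    · simpa using hd1 _ (hline t ht) i
    · simpa using hd2 _ (hline t ht) i
  have hchord := le_of_convexOn_half_mul_sq_sub hconvex hxi hyi hl₀.le hl₁.le
  rw [Function.update_eq_self, Function.update_eq_iff.2 ⟨rfl, hxy⟩] at hchord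
  have hdefect : M / 2 * (l * (1 - l) * (x i - y i) ^ 2) ≤ M / 8 :=
    (mul_le_mul_of_nonneg_left (mul_one_sub_mul_sq_sub_le_quarter hxi hyi)
      (by positivity)).trans_eq (by ring)
  rw [smul_add_one_sub_smul_eq_update hxy]
  exact exp_neg_le_exp_mul_of_sub_le hl₀.le hl₁.le (by linarith)

theorem density_relaxed_convex_of_bounded_pure_second_derivatives
    (n : ℕ) (M : ℝ) (hM : 0 ≤ M) (ψ : (Fin n → ℝ) → ℝ)
    (hconv : ConvexOn ℝ (Icc (0 : Fin n → ℝ) 1) ψ)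
    (ψ' ψ'' : (Fin n → ℝ) → Fin n → ℝ)
    (hd1 : ∀ x ∈ Icc (0 : Fin n → ℝ) 1, ∀ i : Fin n,
      HasDerivWithinAt (fun t => ψ (Function.update x i t)) (ψ' x i) (Icc 0 1) (x i))
    (hd2 : ∀ x ∈ Icc (0 : Fin n → ℝ) 1, ∀ i : Fin n,
      HasDerivWithinAt (fun t => ψ' (Function.update x i t) i) (ψ'' x i) (Icc 0 1) (x i))
    (hbd : ∀ x ∈ Icc (0 : Fin n → ℝ) 1, ∀ i : Fin n, ψ'' x i ≤ M) :
    ∀ x ∈ Icc (0 : Fin n → ℝ) 1, ∀ y ∈ Icc (0 : Fin n → ℝ) 1,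
      (∃ i : Fin n, ∀ j : Fin n, j ≠ i → x j = y j) →
      ∀ l : ℝ, 0 < l → l < 1 →
        Real.exp (-ψ (l • x + (1 - l) • y)) ≤
          Real.exp (M / 8) *
            (l * Real.exp (-ψ x) + (1 - l) * Real.exp (-ψ y)) :=
  density_relaxed_convex_of_bounded_pure_second_derivatives_general n M hM ψ ψ' ψ'' hd1 hd2 hbd
end

section
/- Let ρ : ℝⁿ → [0,∞) be an integrable log-concave probability density, and let γ_n(x) = (2π)^{-n/2} exp(-|x|²/2) be the standard Gaussian density. Then the convolution f = ρ * γ_n satisfies ∇²(log f)(x) ≥ -Id for all x ∈ ℝⁿ, in the sense of symmetric matrices. -/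
/-!
Completing the square, `e^{-‖x + s v - y‖²/2} = e^{-s²/2} e^{s ⟪y - x, v⟫} e^{-‖x - y‖²/2}` for a
unit vector `v`, so `log f (x + s v) = -s²/2 + K(s)` where `K` is the cumulant generating function
of `y ↦ ⟪y - x, v⟫` under the finite measure `ρ(y) γ(x - y) dy`. Since `ρ` is integrable and `γ` is
bounded, all exponential moments are finite, and `K''(s)` is the variance of `⟪y - x, v⟫` under
the tilted measure, hence nonnegative.
-/

open MeasureTheory ProbabilityTheory Real

open scoped RealInnerProductSpace

section WithDensity

variable {α : Type*} [MeasurableSpace α] {μ : Measure α} {w : α → ℝ}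

lemma integral_withDensity_ofReal (hw0 : ∀ a, 0 ≤ w a) (hw : AEMeasurable w μ) (g : α → ℝ) :
    ∫ a, g a ∂μ.withDensity (fun a => ENNReal.ofReal (w a)) = ∫ a, w a * g a ∂μ := by
  rw [integral_withDensity_eq_integral_toReal_smul₀ (by fun_prop)
    (.of_forall fun _ => ENNReal.ofReal_lt_top)]
  simp only [ENNReal.toReal_ofReal (hw0 _), smul_eq_mul]

lemma integrable_withDensity_ofReal_iff (hw0 : ∀ a, 0 ≤ w a) (hw : AEMeasurable w μ)
    {g : α → ℝ} :
    Integrable g (μ.withDensity fun a => ENNReal.ofReal (w a)) ↔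
      Integrable (fun a => w a * g a) μ := by
  rw [integrable_withDensity_iff_integrable_smul₀' (by fun_prop)
    (.of_forall fun _ => ENNReal.ofReal_lt_top)]
  simp only [ENNReal.toReal_ofReal (hw0 _), smul_eq_mul]

end WithDensity

namespace ProbabilityTheory

variable {Ω : Type*} [MeasurableSpace Ω] {X : Ω → ℝ} {μ : Measure Ω} {t : ℝ}

lemma iteratedDeriv_two_cgf_nonneg (h : t ∈ interior (integrableExpSet X μ)) :
    0 ≤ iteratedDeriv 2 (cgf X μ) t := by
  rw [iteratedDeriv_two_cgf_eq_integral h]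
  exact div_nonneg (integral_nonneg fun ω => by positivity) mgf_nonneg

lemma hasDerivAt_deriv_cgf (h : t ∈ interior (integrableExpSet X μ)) :
    HasDerivAt (deriv (cgf X μ)) (iteratedDeriv 2 (cgf X μ) t) t := by
  rw [iteratedDeriv_succ, iteratedDeriv_one]
  exact (analyticAt_cgf h).deriv.differentiableAt.hasDerivAt

end ProbabilityTheory

lemma exp_neg_norm_sub_sq_mul_exp_inner {E : Type*} [NormedAddCommGroup E]
    [InnerProductSpace ℝ E] {v : E} (hv : ‖v‖ = 1) (x y : E) (s : ℝ) :
    exp (-‖x - y‖ ^ 2 / 2) * exp (s * ⟪y - x, v⟫)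
      = exp (s ^ 2 / 2) * exp (-‖x + s • v - y‖ ^ 2 / 2) := by
  have hnorm : ‖x + s • v - y‖ ^ 2 = ‖x - y‖ ^ 2 - 2 * (s * ⟪y - x, v⟫) + s ^ 2 := by
    rw [show x + s • v - y = (x - y) + s • v by abel, norm_add_sq_real, real_inner_smul_right,
      norm_smul, Real.norm_eq_abs, hv, mul_one, sq_abs, ← neg_sub y x, inner_neg_left]
    ring
  rw [hnorm, ← exp_add, ← exp_add]
  ring_nf

section GaussianPosterior

variable {E : Type*} [NormedAddCommGroup E] [MeasurableSpace E] [BorelSpace E]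
  {μ : Measure E} {ρ : E → ℝ} {c : ℝ}

/-- The unnormalised conditional law of `Y` given `Y + G = x`, for `Y` of density `ρ` and an
independent Gaussian `G` of density `c e^{-‖z‖²/2}`. -/
noncomputable def gaussianPosterior (μ : Measure E) (ρ : E → ℝ) (c : ℝ) (x : E) : Measure E :=
  μ.withDensity fun y => ENNReal.ofReal (ρ y * (c * exp (-‖x - y‖ ^ 2 / 2)))

lemma gaussianPosterior_ne_zero (hρ0 : ∀ y, 0 ≤ ρ y) (hρ : Integrable ρ μ)
    (hρ_ne : ∫ y, ρ y ∂μ ≠ 0) (hc : 0 < c) (x : E) : gaussianPosterior μ ρ c x ≠ 0 := by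
  have hρm := hρ.aemeasurable
  rw [gaussianPosterior, Ne, withDensity_eq_zero_iff (by fun_prop)]
  refine fun h => hρ_ne (integral_eq_zero_of_ae ?_)
  filter_upwards [h] with y hy
  have : ρ y * (c * exp (-‖x - y‖ ^ 2 / 2)) ≤ 0 := ENNReal.ofReal_eq_zero.1 hy
  exact le_antisymm (nonpos_of_mul_nonpos_left this (by positivity)) (hρ0 y)

variable [InnerProductSpace ℝ E]

lemma integrableExpSet_gaussianPosterior (hρ0 : ∀ y, 0 ≤ ρ y) (hρ : Integrable ρ μ)
    (hc : 0 ≤ c) (x : E) {v : E} (hv : ‖v‖ = 1) :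
    integrableExpSet (fun y => ⟪y - x, v⟫) (gaussianPosterior μ ρ c x) = Set.univ := by
  refine Set.eq_univ_of_forall fun s => ?_
  rw [integrableExpSet, Set.mem_ofPred_eq, gaussianPosterior,
    integrable_withDensity_ofReal_iff (fun y => mul_nonneg (hρ0 y) (by positivity))
      (hρ.aemeasurable.mul (by fun_prop))]
  refine (hρ.const_mul (exp (s ^ 2 / 2) * c)).mono'
    ((hρ.aestronglyMeasurable.mul (by fun_prop : Continuous fun y =>
      c * exp (-‖x - y‖ ^ 2 / 2)).aestronglyMeasurable).mul
      (by fun_prop : Continuous fun y => exp (s * ⟪y - x, v⟫)).aestronglyMeasurable)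
    (.of_forall fun y => ?_)
  have hgauss : exp (-‖x + s • v - y‖ ^ 2 / 2) ≤ 1 := exp_le_one_iff.2 (by nlinarith)
  rw [mul_assoc, mul_assoc, exp_neg_norm_sub_sq_mul_exp_inner hv, Real.norm_eq_abs,
    abs_of_nonneg (mul_nonneg (hρ0 y) (by positivity))]
  calc ρ y * (c * (exp (s ^ 2 / 2) * exp (-‖x + s • v - y‖ ^ 2 / 2)))
      = exp (s ^ 2 / 2) * c * ρ y * exp (-‖x + s • v - y‖ ^ 2 / 2) := by ring
    _ ≤ exp (s ^ 2 / 2) * c * ρ y := mul_le_of_le_one_right (by positivity [hρ0 y]) hgauss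

lemma mgf_gaussianPosterior (hρ0 : ∀ y, 0 ≤ ρ y) (hρ : AEMeasurable ρ μ) (hc : 0 ≤ c)
    (x : E) {v : E} (hv : ‖v‖ = 1) (s : ℝ) :
    mgf (fun y => ⟪y - x, v⟫) (gaussianPosterior μ ρ c x) s
      = exp (s ^ 2 / 2) * ∫ y, ρ y * (c * exp (-‖x + s • v - y‖ ^ 2 / 2)) ∂μ := by
  rw [mgf, gaussianPosterior, integral_withDensity_ofReal
    (fun y => mul_nonneg (hρ0 y) (by positivity)) (hρ.mul (by fun_prop)), ← integral_const_mul]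
  congr 1 with y
  rw [mul_assoc, mul_assoc, exp_neg_norm_sub_sq_mul_exp_inner hv]
  ring

lemma log_integral_gaussian_add_smul (hρ0 : ∀ y, 0 ≤ ρ y) (hρ : Integrable ρ μ)
    (hρ_ne : ∫ y, ρ y ∂μ ≠ 0) (hc : 0 < c) (x : E) {v : E} (hv : ‖v‖ = 1) (s : ℝ) :
    log (∫ y, ρ y * (c * exp (-‖x + s • v - y‖ ^ 2 / 2)) ∂μ)
      = -(s ^ 2 / 2) + cgf (fun y => ⟪y - x, v⟫) (gaussianPosterior μ ρ c x) s := by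
  have hmgf := mgf_pos' (gaussianPosterior_ne_zero hρ0 hρ hρ_ne hc x)
    (Set.eq_univ_iff_forall.1 (integrableExpSet_gaussianPosterior hρ0 hρ hc.le x hv) s)
  rw [mgf_gaussianPosterior hρ0 hρ.aemeasurable hc.le x hv] at hmgf
  rw [cgf, mgf_gaussianPosterior hρ0 hρ.aemeasurable hc.le x hv,
    log_mul (exp_pos _).ne' (pos_of_mul_pos_right hmgf (exp_pos _).le).ne', log_exp]
  ring

end GaussianPosterior

theorem hessian_log_gaussian_convolution_general (n : ℕ)
    (ρ : EuclideanSpace ℝ (Fin n) → ℝ)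
    (hρ0 : ∀ x, 0 ≤ ρ x) (hρint : Integrable ρ) (hρ1 : ∫ x, ρ x = 1)
    (γ : EuclideanSpace ℝ (Fin n) → ℝ)
    (hγ : γ = fun x => (2 * π) ^ (-(n : ℝ) / 2) * Real.exp (-‖x‖ ^ 2 / 2))
    (f : EuclideanSpace ℝ (Fin n) → ℝ)
    (hf : f = fun x => ∫ y, ρ y * γ (x - y)) :
    ∀ x v : EuclideanSpace ℝ (Fin n), ‖v‖ = 1 →
      ∃ g' : ℝ → ℝ,
        (∀ t : ℝ, HasDerivAt (fun s => Real.log (f (x + s • v))) (g' t) t) ∧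
        ∃ d : ℝ, HasDerivAt g' d 0 ∧ -1 ≤ d := by
  subst hγ hf
  intro x v hv
  have hc : 0 < (2 * π) ^ (-(n : ℝ) / 2) := by positivity
  set μx := gaussianPosterior volume ρ ((2 * π) ^ (-(n : ℝ) / 2)) x
  set X := fun y : EuclideanSpace ℝ (Fin n) => ⟪y - x, v⟫
  have hX (t : ℝ) : t ∈ interior (integrableExpSet X μx) := by
    rw [integrableExpSet_gaussianPosterior hρ0 hρint hc.le x hv, interior_univ]
    exact Set.mem_univ t
  have hlog : (fun s : ℝ => log (∫ y, ρ y * ((2 * π) ^ (-(n : ℝ) / 2) *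
      exp (-‖x + s • v - y‖ ^ 2 / 2)))) = fun s => -(s ^ 2 / 2) + cgf X μx s :=
    funext (log_integral_gaussian_add_smul hρ0 hρint (by simp [hρ1]) hc x hv)
  refine ⟨fun t => -t + deriv (cgf X μx) t, fun t => ?_,
    -1 + iteratedDeriv 2 (cgf X μx) 0, ?_, ?_⟩
  · beta_reduce
    rw [hlog]
    exact (((hasDerivAt_pow 2 t).div_const 2).neg.congr_deriv (by ring)).add
      (analyticAt_cgf (hX t)).differentiableAt.hasDerivAt
  · exact (hasDerivAt_neg 0).add (hasDerivAt_deriv_cgf (hX 0))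
  · linarith [iteratedDeriv_two_cgf_nonneg (hX 0)]

theorem hessian_log_gaussian_convolution (n : ℕ)
    (ρ : EuclideanSpace ℝ (Fin n) → ℝ)
    (hρ0 : ∀ x, 0 ≤ ρ x) (hρint : Integrable ρ) (hρ1 : ∫ x, ρ x = 1)
    (hlc : ∀ x y : EuclideanSpace ℝ (Fin n), ∀ l : ℝ, 0 ≤ l → l ≤ 1 →
      ρ x ^ l * ρ y ^ (1 - l) ≤ ρ (l • x + (1 - l) • y))
    (γ : EuclideanSpace ℝ (Fin n) → ℝ)
    (hγ : γ = fun x => (2 * π) ^ (-(n : ℝ) / 2) * Real.exp (-‖x‖ ^ 2 / 2))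
    (f : EuclideanSpace ℝ (Fin n) → ℝ)
    (hf : f = fun x => ∫ y, ρ y * γ (x - y)) :
    ∀ x v : EuclideanSpace ℝ (Fin n), ‖v‖ = 1 →
      ∃ g' : ℝ → ℝ,
        (∀ t : ℝ, HasDerivAt (fun s => Real.log (f (x + s • v))) (g' t) t) ∧
        ∃ d : ℝ, HasDerivAt g' d 0 ∧ -1 ≤ d :=
  hessian_log_gaussian_convolution_general n ρ hρ0 hρint hρ1 γ hγ f hf
end

section
/- Let I, J ⊂ ℝ be bounded intervals of positive length and let f : I → (0,∞), g : J → (0,∞) be integrable. Let T : closure(I) → closure(J) be the monotone transportation map from f to g, defined by (1/∫_I f)∫_I f(t)1_{t<x} dt = (1/∫_J g)∫_J g(t)1_{t<T(x)} dt. Then T is strictly increasing, absolutely continuous, and for almost every x ∈ I, T'(x) = ((∫_J g)/(∫_I f)) · f(x)/g(T(x)). -/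
/-!
Write `F x = ∫ t in a..x, f t`, `G y = ∫ t in c..y, g t` and `k = (∫ g) / (∫ f)` for the ratio of
the total masses. Both primitives are continuous and strictly increasing, and the defining relation reads
`G ∘ T = k • F` on `[a, b]`; hence `T` is a strictly increasing bijection `[a, b] → [c, d]`
(intermediate value theorem). Comparing distribution functions then shows that `T` pushes the
measure `k f(t) dt` on `[a, x]` forward to `g(y) dy` on `[c, T x]`, and the change of variables
`∫ t in a..x, k f t / g (T t) = ∫ y in c..T x, g y / g y = T x - c` exhibits `T` as the primitive
of `k f / (g ∘ T)`.
-/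

open Set MeasureTheory

theorem StrictMonoOn.of_comp_left {α β γ : Type*} [Preorder α] [LinearOrder β] [Preorder γ]
    {g : β → γ} {f : α → β} {s : Set α} {t : Set β} (h : StrictMonoOn (g ∘ f) s)
    (hg : MonotoneOn g t) (hf : MapsTo f s t) : StrictMonoOn f s := fun _ hx _ hy hxy =>
  lt_of_not_ge fun hyx => (h hx hy hxy).not_ge (hg (hf hy) (hf hx) hyx)

theorem Set.SurjOn.of_comp_left {α β γ : Type*} {g : β → γ} {f : α → β} {s : Set α} {t : Set β}
    (h : SurjOn (g ∘ f) s (g '' t)) (hg : InjOn g t) (hf : MapsTo f s t) : SurjOn f s t :=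
  fun y hy => by
    obtain ⟨x, hx, hxy⟩ := h (mem_image_of_mem g hy)
    exact ⟨x, hx, hg (hf hx) hy hxy⟩

theorem MeasureTheory.IntegrableOn.intervalIntegrable_of_mem_Icc {f : ℝ → ℝ} {a b x y : ℝ}
    (hf : IntegrableOn f (Icc a b)) (hx : x ∈ Icc a b) (hy : y ∈ Icc a b) :
    IntervalIntegrable f volume x y :=
  (hf.mono_set (uIcc_subset_Icc hx hy)).intervalIntegrable

theorem strictMonoOn_intervalIntegral_of_pos {f : ℝ → ℝ} {a b : ℝ}
    (hf : IntegrableOn f (Icc a b)) (hpos : ∀ x ∈ Icc a b, 0 < f x) :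
    StrictMonoOn (fun x => ∫ t in a..x, f t) (Icc a b) := by
  intro x hx y hy hxy
  have ha : a ∈ Icc a b := ⟨le_rfl, hx.1.trans hx.2⟩
  have hpos' : 0 < ∫ t in x..y, f t :=
    intervalIntegral.intervalIntegral_pos_of_pos_on (hf.intervalIntegrable_of_mem_Icc hx hy)
      (fun t ht => hpos t ⟨hx.1.trans ht.1.le, ht.2.le.trans hy.2⟩) hxy
  have hsub := intervalIntegral.integral_interval_sub_left
    (hf.intervalIntegrable_of_mem_Icc ha hy) (hf.intervalIntegrable_of_mem_Icc ha hx)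
  simp only
  linarith

theorem setIntegral_Icc_pos {f : ℝ → ℝ} {a b : ℝ} (hab : a < b) (hf : IntegrableOn f (Icc a b))
    (hpos : ∀ x ∈ Icc a b, 0 < f x) : 0 < ∫ t in Icc a b, f t := by
  have := strictMonoOn_intervalIntegral_of_pos hf hpos ⟨le_rfl, hab.le⟩ ⟨hab.le, le_rfl⟩ hab
  simp only at this
  rwa [intervalIntegral.integral_same, intervalIntegral.integral_of_le hab.le,
    ← integral_Icc_eq_integral_Ioc] at this

theorem withDensity_ofReal_apply_Icc {f : ℝ → ℝ} {a x : ℝ} (hax : a ≤ x)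
    (hf : IntegrableOn f (Icc a x)) (hnn : ∀ t ∈ Icc a x, 0 ≤ f t) :
    volume.withDensity (fun t => ENNReal.ofReal (f t)) (Icc a x) =
      ENNReal.ofReal (∫ t in a..x, f t) := by
  rw [withDensity_apply _ measurableSet_Icc, ← ofReal_integral_eq_lintegral_ofReal hf
    ((ae_restrict_iff' measurableSet_Icc).2 (ae_of_all _ hnn)),
    intervalIntegral.integral_of_le hax, integral_Icc_eq_integral_Ioc]

theorem map_restrict_Icc_eq_of_strictMonoOn {μ ν : Measure ℝ} {T : ℝ → ℝ} {a b c d : ℝ}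
    (hT : StrictMonoOn T (Icc a b)) (hmaps : MapsTo T (Icc a b) (Icc c d))
    (hsurj : SurjOn T (Icc a b) (Icc c d)) (hμ : μ (Icc a b) ≠ ⊤)
    (hμν : ∀ x ∈ Icc a b, μ (Icc a x) = ν (Icc c (T x))) {x : ℝ} (hx : x ∈ Icc a b) :
    (μ.restrict (Icc a x)).map T = ν.restrict (Icc c (T x)) := by
  have hsub : Icc a x ⊆ Icc a b := Icc_subset_Icc_right hx.2
  have := isFiniteMeasure_restrict.2 ((measure_mono hsub).trans_lt hμ.lt_top).ne
  have hTm : AEMeasurable T (μ.restrict (Icc a x)) :=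
    aemeasurable_restrict_of_monotoneOn measurableSet_Icc (hT.monotoneOn.mono hsub)
  refine Measure.ext_of_Iic _ _ fun y => ?_
  rw [Measure.map_apply_of_aemeasurable hTm measurableSet_Iic,
    Measure.restrict_apply' measurableSet_Icc, Measure.restrict_apply' measurableSet_Icc]
  rcases lt_or_ge y c with hyc | hcy
  · have hl : T ⁻¹' Iic y ∩ Icc a x = ∅ :=
      eq_empty_of_forall_notMem fun t ⟨hty, ht⟩ => (hyc.trans_le (hmaps (hsub ht)).1).not_ge hty
    have hr : Iic y ∩ Icc c (T x) = ∅ :=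
      eq_empty_of_forall_notMem fun t ⟨hty, ht⟩ => (hyc.trans_le ht.1).not_ge hty
    rw [hl, hr, measure_empty, measure_empty]
  · obtain ⟨s, hs, hTs⟩ := hsurj ⟨le_min hcy (hmaps hx).1, (min_le_right _ _).trans (hmaps hx).2⟩
    have hsx : s ≤ x := (hT.le_iff_le hs hx).1 (hTs ▸ min_le_right _ _)
    have hl : T ⁻¹' Iic y ∩ Icc a x = Icc a s := by
      ext t
      simp only [mem_inter_iff, mem_preimage, mem_Iic, mem_Icc]
      constructor
      · rintro ⟨hty, hat, htx⟩
        refine ⟨hat, (hT.le_iff_le ⟨hat, htx.trans hx.2⟩ hs).1 ?_⟩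
        exact hTs ▸ le_min hty ((hT.le_iff_le ⟨hat, htx.trans hx.2⟩ hx).2 htx)
      · rintro ⟨hat, hts⟩
        refine ⟨?_, hat, hts.trans hsx⟩
        exact ((hT.le_iff_le ⟨hat, hts.trans hs.2⟩ hs).2 hts).trans (hTs ▸ min_le_left _ _)
    have hr : Iic y ∩ Icc c (T x) = Icc c (T s) := by
      ext t
      simp only [mem_inter_iff, mem_Iic, mem_Icc, hTs, le_min_iff]
      tauto
    rw [hl, hr, hμν s hs]

theorem integrableOn_and_intervalIntegral_eq_of_lintegral {φ : ℝ → ℝ} {a x r : ℝ} (hax : a ≤ x)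
    (hφm : AEStronglyMeasurable φ (volume.restrict (Icc a x))) (hφ : ∀ t ∈ Icc a x, 0 ≤ φ t)
    (hr : 0 ≤ r) (h : ∫⁻ t in Icc a x, ENNReal.ofReal (φ t) = ENNReal.ofReal r) :
    IntegrableOn φ (Icc a x) ∧ ∫ t in a..x, φ t = r := by
  have hnn : 0 ≤ᵐ[volume.restrict (Icc a x)] φ :=
    (ae_restrict_iff' measurableSet_Icc).2 (ae_of_all _ hφ)
  refine ⟨(lintegral_ofReal_ne_top_iff_integrable hφm hnn).1 (h ▸ ENNReal.ofReal_ne_top), ?_⟩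
  rw [intervalIntegral.integral_of_le hax, ← integral_Icc_eq_integral_Ioc,
    integral_eq_lintegral_of_nonneg_ae hnn hφm, h, ENNReal.toReal_ofReal hr]

section Transport

variable {f g T : ℝ → ℝ} {a b c d k : ℝ}

theorem strictMonoOn_of_transport (hk : 0 < k) (hfpos : ∀ x ∈ Icc a b, 0 < f x)
    (hgpos : ∀ y ∈ Icc c d, 0 < g y) (hfint : IntegrableOn f (Icc a b))
    (hgint : IntegrableOn g (Icc c d)) (hmaps : MapsTo T (Icc a b) (Icc c d))
    (hcomp : ∀ x ∈ Icc a b, ∫ t in c..T x, g t = k * ∫ t in a..x, f t) :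
    StrictMonoOn T (Icc a b) :=
  StrictMonoOn.of_comp_left (g := fun y => ∫ t in c..y, g t)
    (((strictMono_mul_left_of_pos hk).comp_strictMonoOn
      (strictMonoOn_intervalIntegral_of_pos hfint hfpos)).congr
      fun x hx => (hcomp x hx).symm)
    (strictMonoOn_intervalIntegral_of_pos hgint hgpos).monotoneOn hmaps

theorem surjOn_of_transport (hab : a ≤ b) (hgpos : ∀ y ∈ Icc c d, 0 < g y)
    (hfint : IntegrableOn f (Icc a b)) (hgint : IntegrableOn g (Icc c d))
    (hmaps : MapsTo T (Icc a b) (Icc c d))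
    (hcomp : ∀ x ∈ Icc a b, ∫ t in c..T x, g t = k * ∫ t in a..x, f t)
    (hnorm : ∫ t in c..d, g t = k * ∫ t in a..b, f t) :
    SurjOn T (Icc a b) (Icc c d) := by
  have hG := strictMonoOn_intervalIntegral_of_pos hgint hgpos
  have hF : ContinuousOn (fun x => k * ∫ t in a..x, f t) (Icc a b) := by
    have := intervalIntegral.continuousOn_primitive_interval (μ := volume) (f := f) (a := a)
      (b := b) (by rwa [uIcc_of_le hab])
    exact continuousOn_const.mul (by rwa [uIcc_of_le hab] at this)
  refine SurjOn.of_comp_left ?_ hG.injOn hmaps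
  calc (fun y => ∫ t in c..y, g t) '' Icc c d
      ⊆ Icc (∫ t in c..c, g t) (∫ t in c..d, g t) := hG.monotoneOn.image_Icc_subset
    _ = Icc (k * ∫ t in a..a, f t) (k * ∫ t in a..b, f t) := by
      rw [hnorm, intervalIntegral.integral_same, intervalIntegral.integral_same, mul_zero]
    _ ⊆ (fun x => k * ∫ t in a..x, f t) '' Icc a b := intermediate_value_Icc hab hF
    _ = _ := image_congr fun x hx => (hcomp x hx).symm

theorem map_withDensity_of_transport (hk : 0 ≤ k) (hfnn : ∀ x ∈ Icc a b, 0 ≤ f x)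
    (hgnn : ∀ y ∈ Icc c d, 0 ≤ g y) (hfint : IntegrableOn f (Icc a b))
    (hgint : IntegrableOn g (Icc c d)) (hT : StrictMonoOn T (Icc a b))
    (hmaps : MapsTo T (Icc a b) (Icc c d)) (hsurj : SurjOn T (Icc a b) (Icc c d))
    (hcomp : ∀ x ∈ Icc a b, ∫ t in c..T x, g t = k * ∫ t in a..x, f t) {x : ℝ}
    (hx : x ∈ Icc a b) :
    ((volume.withDensity fun t => ENNReal.ofReal (k * f t)).restrict (Icc a x)).map T =
      (volume.withDensity fun y => ENNReal.ofReal (g y)).restrict (Icc c (T x)) := by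
  have hμ : ∀ x ∈ Icc a b, volume.withDensity (fun t => ENNReal.ofReal (k * f t)) (Icc a x) =
      ENNReal.ofReal (k * ∫ t in a..x, f t) := fun x hx => by
    rw [withDensity_ofReal_apply_Icc hx.1 ((hfint.mono_set (Icc_subset_Icc_right hx.2)).const_mul k)
      fun t ht => mul_nonneg hk (hfnn t ⟨ht.1, ht.2.trans hx.2⟩),
      intervalIntegral.integral_const_mul]
  refine map_restrict_Icc_eq_of_strictMonoOn hT hmaps hsurj
    (hμ b ⟨hx.1.trans hx.2, le_rfl⟩ ▸ ENNReal.ofReal_ne_top) (fun x hx => ?_) hx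
  have hTx := hmaps hx
  rw [hμ x hx, ← hcomp x hx, withDensity_ofReal_apply_Icc hTx.1
    (hgint.mono_set (Icc_subset_Icc_right hTx.2)) fun t ht => hgnn t ⟨ht.1, ht.2.trans hTx.2⟩]

theorem lintegral_transport_deriv_Icc (hk : 0 ≤ k) (hfnn : ∀ x ∈ Icc a b, 0 ≤ f x)
    (hgpos : ∀ y ∈ Icc c d, 0 < g y) (hfint : IntegrableOn f (Icc a b))
    (hgint : IntegrableOn g (Icc c d)) (hT : StrictMonoOn T (Icc a b))
    (hmaps : MapsTo T (Icc a b) (Icc c d)) (hsurj : SurjOn T (Icc a b) (Icc c d))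
    (hcomp : ∀ x ∈ Icc a b, ∫ t in c..T x, g t = k * ∫ t in a..x, f t) {x : ℝ}
    (hx : x ∈ Icc a b) :
    ∫⁻ t in Icc a x, ENNReal.ofReal (k * f t / g (T t)) = ENNReal.ofReal (T x - c) := by
  have hsub : Icc a x ⊆ Icc a b := Icc_subset_Icc_right hx.2
  have hTx := hmaps hx
  have hsub' : Icc c (T x) ⊆ Icc c d := Icc_subset_Icc_right hTx.2
  have hmap := map_withDensity_of_transport hk hfnn (fun y hy => (hgpos y hy).le) hfint hgint
    hT hmaps hsurj hcomp hx
  have hTm : AEMeasurable T (volume.restrict (Icc a x)) :=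
    aemeasurable_restrict_of_monotoneOn measurableSet_Icc (hT.monotoneOn.mono hsub)
  have hfm : AEMeasurable (fun t => ENNReal.ofReal (k * f t)) (volume.restrict (Icc a x)) :=
    ((hfint.mono_set hsub).aemeasurable.const_mul k).ennreal_ofReal
  have hgm : AEMeasurable g (volume.restrict (Icc c (T x))) := (hgint.mono_set hsub').aemeasurable
  calc ∫⁻ t in Icc a x, ENNReal.ofReal (k * f t / g (T t))
      = ∫⁻ t in Icc a x, ((fun t => ENNReal.ofReal (k * f t)) *
          fun t => ENNReal.ofReal (g (T t))⁻¹) t :=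
        setLIntegral_congr_fun measurableSet_Icc fun t ht => by
          rw [Pi.mul_apply, div_eq_mul_inv,
            ENNReal.ofReal_mul (mul_nonneg hk (hfnn t (hsub ht)))]
    _ = ∫⁻ t in Icc a x, ENNReal.ofReal (g (T t))⁻¹
          ∂volume.withDensity fun t => ENNReal.ofReal (k * f t) :=
        (setLIntegral_withDensity_eq_setLIntegral_mul_non_measurable₀ _ hfm _ measurableSet_Icc
          (ae_of_all _ fun _ => ENNReal.ofReal_lt_top)).symm
    _ = ∫⁻ y in Icc c (T x), ENNReal.ofReal (g y)⁻¹
          ∂volume.withDensity fun y => ENNReal.ofReal (g y) := by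
      have hTm' : AEMeasurable T
          ((volume.withDensity fun t => ENNReal.ofReal (k * f t)).restrict (Icc a x)) := by
        rw [restrict_withDensity measurableSet_Icc]
        exact hTm.mono_ac (withDensity_absolutelyContinuous _ _)
      rw [← hmap, lintegral_map' _ hTm']
      rw [hmap, restrict_withDensity measurableSet_Icc]
      exact hgm.inv.ennreal_ofReal.mono_ac (withDensity_absolutelyContinuous _ _)
    _ = ∫⁻ y in Icc c (T x), ((fun y => ENNReal.ofReal (g y)) *
          fun y => ENNReal.ofReal (g y)⁻¹) y :=
        setLIntegral_withDensity_eq_setLIntegral_mul_non_measurable₀ _ hgm.ennreal_ofReal _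
          measurableSet_Icc (ae_of_all _ fun _ => ENNReal.ofReal_lt_top)
    _ = ∫⁻ _ in Icc c (T x), 1 :=
        setLIntegral_congr_fun measurableSet_Icc fun y hy => by
          rw [Pi.mul_apply, ← ENNReal.ofReal_mul (hgpos y (hsub' hy)).le,
            mul_inv_cancel₀ (hgpos y (hsub' hy)).ne', ENNReal.ofReal_one]
    _ = ENNReal.ofReal (T x - c) := by rw [setLIntegral_one, Real.volume_Icc]

theorem aemeasurable_transport_deriv (hab : a ≤ b) (hk : 0 < k) (hfpos : ∀ x ∈ Icc a b, 0 < f x)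
    (hgnn : ∀ y ∈ Icc c d, 0 ≤ g y) (hfint : IntegrableOn f (Icc a b))
    (hgint : IntegrableOn g (Icc c d)) (hT : StrictMonoOn T (Icc a b))
    (hmaps : MapsTo T (Icc a b) (Icc c d)) (hsurj : SurjOn T (Icc a b) (Icc c d))
    (hcomp : ∀ x ∈ Icc a b, ∫ t in c..T x, g t = k * ∫ t in a..x, f t) :
    AEMeasurable (fun t => k * f t / g (T t)) (volume.restrict (Icc a b)) := by
  have hmap := map_withDensity_of_transport hk.le (fun x hx => (hfpos x hx).le) hgnn hfint hgint
    hT hmaps hsurj hcomp ⟨hab, le_rfl⟩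
  rw [restrict_withDensity measurableSet_Icc, restrict_withDensity measurableSet_Icc] at hmap
  have hfm : AEMeasurable (fun t => ENNReal.ofReal (k * f t)) (volume.restrict (Icc a b)) :=
    (hfint.aemeasurable.const_mul k).ennreal_ofReal
  have hTm : AEMeasurable T (volume.restrict (Icc a b)) :=
    aemeasurable_restrict_of_monotoneOn measurableSet_Icc hT.monotoneOn
  -- `f > 0` makes Lebesgue measure on `[a, b]` absolutely continuous w.r.t. `k f dx`, whose image
  -- under `T` is `g dy`; so `T` pulls back null sets of `[c, d]` to null sets.
  have hac : (volume.restrict (Icc a b)).map T ≪ volume.restrict (Icc c d) := by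
    refine Measure.AbsolutelyContinuous.mk fun E hE hE0 => ?_
    rw [Measure.map_apply_of_aemeasurable hTm hE]
    refine withDensity_absolutelyContinuous' hfm ((ae_restrict_iff' measurableSet_Icc).2
      (ae_of_all _ fun t ht => (ENNReal.ofReal_pos.2 (mul_pos hk (hfpos t ht))).ne')) ?_
    rw [← Measure.map_apply_of_aemeasurable
      (hTm.mono_ac (withDensity_absolutelyContinuous _ _)) hE, hmap]
    exact ((withDensity_absolutelyContinuous _ _).trans (Measure.absolutelyContinuous_of_le
      (Measure.restrict_mono_set _ (Icc_subset_Icc_right (hmaps ⟨hab, le_rfl⟩).2)))) hE0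
  exact (hfint.aemeasurable.const_mul k).div
    ((hgint.aemeasurable.mono_ac hac).comp_aemeasurable hTm)

theorem integrableOn_and_intervalIntegral_transport_deriv (hk : 0 < k)
    (hfpos : ∀ x ∈ Icc a b, 0 < f x) (hgpos : ∀ y ∈ Icc c d, 0 < g y)
    (hfint : IntegrableOn f (Icc a b)) (hgint : IntegrableOn g (Icc c d))
    (hT : StrictMonoOn T (Icc a b)) (hmaps : MapsTo T (Icc a b) (Icc c d))
    (hsurj : SurjOn T (Icc a b) (Icc c d))
    (hcomp : ∀ x ∈ Icc a b, ∫ t in c..T x, g t = k * ∫ t in a..x, f t) {x : ℝ}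
    (hx : x ∈ Icc a b) :
    IntegrableOn (fun t => k * f t / g (T t)) (Icc a x) ∧
      ∫ t in a..x, k * f t / g (T t) = T x - c := by
  have hsub : Icc a x ⊆ Icc a b := Icc_subset_Icc_right hx.2
  refine integrableOn_and_intervalIntegral_eq_of_lintegral hx.1
    ((aemeasurable_transport_deriv (hx.1.trans hx.2) hk hfpos (fun y hy => (hgpos y hy).le) hfint
      hgint hT hmaps hsurj hcomp).mono_set hsub).aestronglyMeasurable
    (fun t ht => div_nonneg (mul_pos hk (hfpos t (hsub ht))).le (hgpos _ (hmaps (hsub ht))).le)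
    (sub_nonneg.2 (hmaps hx).1) ?_
  exact lintegral_transport_deriv_Icc hk.le (fun x hx => (hfpos x hx).le) hgpos hfint hgint hT
    hmaps hsurj hcomp hx

end Transport

theorem monotone_transport_properties (a b c d : ℝ) (hab : a < b) (hcd : c < d)
    (f g : ℝ → ℝ)
    (hfpos : ∀ x ∈ Icc a b, 0 < f x) (hgpos : ∀ x ∈ Icc c d, 0 < g x)
    (hfint : IntegrableOn f (Icc a b)) (hgint : IntegrableOn g (Icc c d))
    (T : ℝ → ℝ) (hTmaps : MapsTo T (Icc a b) (Icc c d))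
    (hTdef : ∀ x ∈ Icc a b,
      (∫ t in a..x, f t) / (∫ t in Icc a b, f t) =
      (∫ t in c..T x, g t) / (∫ t in Icc c d, g t)) :
    StrictMonoOn T (Icc a b) ∧
    ∃ T' : ℝ → ℝ, IntegrableOn T' (Icc a b) ∧
      (∀ x ∈ Icc a b, T x = T a + ∫ t in a..x, T' t) ∧
      (∀ᵐ x ∂(volume.restrict (Icc a b)),
        T' x = ((∫ t in Icc c d, g t) / (∫ t in Icc a b, f t)) * f x / g (T x)) := by
  have ha : a ∈ Icc a b := ⟨le_rfl, hab.le⟩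
  have hb : b ∈ Icc a b := ⟨hab.le, le_rfl⟩
  have hA := setIntegral_Icc_pos hab hfint hfpos
  have hB := setIntegral_Icc_pos hcd hgint hgpos
  set A := ∫ t in Icc a b, f t
  set B := ∫ t in Icc c d, g t
  have hk : 0 < B / A := div_pos hB hA
  have hcomp : ∀ x ∈ Icc a b, ∫ t in c..T x, g t = B / A * ∫ t in a..x, f t := fun x hx => by
    have := hTdef x hx
    field_simp at this ⊢
    linarith
  have hnorm : ∫ t in c..d, g t = B / A * ∫ t in a..b, f t := by
    rw [intervalIntegral.integral_of_le hab.le, intervalIntegral.integral_of_le hcd.le,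
      ← integral_Icc_eq_integral_Ioc, ← integral_Icc_eq_integral_Ioc, div_mul_cancel₀ _ hA.ne']
  have hmono := strictMonoOn_of_transport hk hfpos hgpos hfint hgint hTmaps hcomp
  have hsurj := surjOn_of_transport hab.le hgpos hfint hgint hTmaps hcomp hnorm
  have hT' (x : ℝ) (hx : x ∈ Icc a b) := integrableOn_and_intervalIntegral_transport_deriv hk
    hfpos hgpos hfint hgint hmono hTmaps hsurj hcomp hx
  have hTa : T a = c := (strictMonoOn_intervalIntegral_of_pos hgint hgpos).injOn (hTmaps ha)
    ⟨le_rfl, hcd.le⟩ (by simpa using hcomp a ha)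
  exact ⟨hmono, _, (hT' b hb).1, fun x hx => by rw [(hT' x hx).2, hTa, add_sub_cancel],
    ae_of_all _ fun _ => rfl⟩
end

section
/- Let f, g : ℝⁿ → [0,∞) be probability densities with f log-concave (f = e^{-ψ} with ψ convex on Supp(f), differentiable a.e.). For any transportation map T from f to g and almost every x ∈ Supp(f), S_T{g,f}(x) := f(x) log(g(T(x))/f(x)) − ∇f(x)·(T(x)−x) ≤ f(x) log(g(T(x))/f(T(x))). Consequently ∫_{Supp(f)} S_T{g,f}(x) dx ≤ D(g || f) = ∫ g log(g/f), and therefore Tire(g || f) ≤ D(g || f). -/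
open Set MeasureTheory
open scoped RealInnerProductSpace

theorem tire_le_relative_entropy (n : ℕ)
    (f g : EuclideanSpace ℝ (Fin n) → ℝ)
    (hf0 : ∀ x, 0 ≤ f x) (hg0 : ∀ x, 0 ≤ g x)
    (hfint : Integrable f) (hgint : Integrable g)
    (hf1 : ∫ x, f x = 1) (hg1 : ∫ x, g x = 1)
    (ψ : EuclideanSpace ℝ (Fin n) → ℝ)
    (hψ : ∀ x ∈ {x | f x ≠ 0}, f x = Real.exp (-ψ x))
    (ψ' : EuclideanSpace ℝ (Fin n) → EuclideanSpace ℝ (Fin n))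
    -- convexity of ψ expressed through the subgradient inequality at a.e. point
    (hsub : ∀ x ∈ {x | f x ≠ 0}, ∀ y ∈ {x | f x ≠ 0},
      ψ x + ⟪ψ' x, y - x⟫ ≤ ψ y)
    (hsupp : {y | g y ≠ 0} ⊆ {x | f x ≠ 0})
    (hDint : Integrable (fun x => g x * Real.log (g x / f x)))
    (T : EuclideanSpace ℝ (Fin n) → EuclideanSpace ℝ (Fin n))
    -- T is a transportation map from f to g
    (hT : Measure.map T (volume.withDensity (fun x => ENNReal.ofReal (f x))) =
      volume.withDensity (fun x => ENNReal.ofReal (g x)))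
    (hTmaps : MapsTo T {x | f x ≠ 0} {y | g y ≠ 0})
    (hSint : IntegrableOn
      (fun x => f x * Real.log (g (T x) / f x) + f x * ⟪ψ' x, T x - x⟫)
      {x | f x ≠ 0}) :
    (∀ x ∈ {x | f x ≠ 0},
      f x * Real.log (g (T x) / f x) + f x * ⟪ψ' x, T x - x⟫ ≤
        f x * Real.log (g (T x) / f (T x))) ∧
    ∫ x in {x | f x ≠ 0},
        (f x * Real.log (g (T x) / f x) + f x * ⟪ψ' x, T x - x⟫) ≤
      ∫ x, g x * Real.log (g x / f x) := by
  set s : Set (EuclideanSpace ℝ (Fin n)) := {x | f x ≠ 0} with hs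
  -- Part 1: the pointwise inequality
  have hpt : ∀ x ∈ s,
      f x * Real.log (g (T x) / f x) + f x * ⟪ψ' x, T x - x⟫ ≤
        f x * Real.log (g (T x) / f (T x)) := by
    intro x hx
    have hgTx : g (T x) ≠ 0 := hTmaps hx
    have hTx : T x ∈ s := hsupp hgTx
    rw [Real.log_div hgTx hx, Real.log_div hgTx hTx]
    have hlx : Real.log (f x) = -ψ x := by rw [hψ x hx, Real.log_exp]
    have hly : Real.log (f (T x)) = -ψ (T x) := by rw [hψ _ hTx, Real.log_exp]
    rw [hlx, hly]
    have hsb := hsub x hx (T x) hTx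
    nlinarith [mul_le_mul_of_nonneg_left hsb (hf0 x)]
  refine ⟨hpt, ?_⟩
  -- Part 2
  set μf := volume.withDensity (fun x => ENNReal.ofReal (f x)) with hμf
  set μg := volume.withDensity (fun x => ENNReal.ofReal (g x)) with hμg
  have hμg_ne : μg ≠ 0 := by
    intro h0
    have huniv : μg Set.univ = ENNReal.ofReal 1 := by
      rw [hμg, withDensity_apply _ MeasurableSet.univ, setLIntegral_univ,
        ← ofReal_integral_eq_lintegral_ofReal hgint (Filter.Eventually.of_forall hg0), hg1]
    rw [h0] at huniv
    simp at huniv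
  have hTae : AEMeasurable T μf := by
    by_contra hc
    rw [Measure.map_of_not_aemeasurable hc] at hT
    exact hμg_ne hT.symm
  have hfm : AEStronglyMeasurable f volume := hfint.1
  have hgm : AEStronglyMeasurable g volume := hgint.1
  have hac_g : μg ≪ volume := withDensity_absolutelyContinuous _ _
  set h : EuclideanSpace ℝ (Fin n) → ℝ := fun y => Real.log (g y / f y) with hh
  have hhm : AEStronglyMeasurable h μg :=
    (Real.measurable_log.comp_aemeasurable
      ((hgm.aemeasurable.mono_ac hac_g).div
        (hfm.aemeasurable.mono_ac hac_g))).aestronglyMeasurable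
  have hgden : (fun x => ENNReal.ofReal (g x)) =
      fun x => ((Real.toNNReal (g x) : NNReal) : ENNReal) := rfl
  have hfden : (fun x => ENNReal.ofReal (f x)) =
      fun x => ((Real.toNNReal (f x) : NNReal) : ENNReal) := rfl
  have hgNN : AEMeasurable (fun x => (g x).toNNReal) volume :=
    hgm.aemeasurable.real_toNNReal
  have hfNN : AEMeasurable (fun x => (f x).toNNReal) volume :=
    hfm.aemeasurable.real_toNNReal
  -- ∫ h dμg = ∫ g·h dvol
  have key1 : ∫ y, h y ∂μg = ∫ x, g x * h x := by
    rw [hμg, hgden, integral_withDensity_eq_integral_smul₀ hgNN h]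
    congr 1; ext x
    simp [NNReal.smul_def, Real.coe_toNNReal _ (hg0 x)]
  -- ∫ h dμg = ∫ h∘T dμf
  have hhmT : AEStronglyMeasurable h (Measure.map T μf) := by rwa [hT]
  have key2 : ∫ y, h y ∂μg = ∫ x, h (T x) ∂μf := by
    rw [← hT]; exact integral_map hTae hhmT
  -- ∫ h∘T dμf = ∫ f·(h∘T) dvol
  have key3 : ∫ x, h (T x) ∂μf = ∫ x, f x * h (T x) := by
    rw [hμf, hfden, integral_withDensity_eq_integral_smul₀ hfNN (fun x => h (T x))]
    congr 1; ext x
    simp [NNReal.smul_def, Real.coe_toNNReal _ (hf0 x)]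
  -- integrability of f·(h∘T)
  have hIg : Integrable h μg := by
    rw [hμg, hgden, integrable_withDensity_iff_integrable_smul₀ hgNN]
    refine hDint.congr (Filter.Eventually.of_forall fun x => ?_)
    simp [NNReal.smul_def, Real.coe_toNNReal _ (hg0 x), hh]
  have hIT : Integrable (fun x => h (T x)) μf :=
    (integrable_map_measure hhmT hTae).1 (by rwa [hT])
  have hIfT : Integrable (fun x => f x * h (T x)) volume := by
    rw [hμf, hfden, integrable_withDensity_iff_integrable_smul₀ hfNN] at hIT
    refine hIT.congr (Filter.Eventually.of_forall fun x => ?_)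
    simp [NNReal.smul_def, Real.coe_toNNReal _ (hf0 x)]
  -- s is null measurable
  have hsnull : NullMeasurableSet s (volume : Measure (EuclideanSpace ℝ (Fin n))) := by
    obtain ⟨f₀, hm, heq⟩ := hfm.aemeasurable
    refine NullMeasurableSet.congr
      ((hm (measurableSet_singleton (0 : ℝ)).compl).nullMeasurableSet) ?_
    filter_upwards [heq] with x hx
    exact propext (by show ¬f₀ x = 0 ↔ ¬f x = 0; rw [hx])
  -- monotonicity on s
  have step1 : ∫ x in s,
      (f x * Real.log (g (T x) / f x) + f x * ⟪ψ' x, T x - x⟫) ≤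
      ∫ x in s, f x * h (T x) := by
    refine integral_mono_ae hSint hIfT.integrableOn ?_
    filter_upwards [ae_restrict_mem₀ hsnull] with x hx
    exact hpt x hx
  have step2 : ∫ x in s, f x * h (T x) = ∫ x, f x * h (T x) := by
    refine setIntegral_eq_integral_of_forall_compl_eq_zero fun x hx => ?_
    have : f x = 0 := by simpa [hs] using hx
    simp [this]
  calc ∫ x in s, (f x * Real.log (g (T x) / f x) + f x * ⟪ψ' x, T x - x⟫)
      ≤ ∫ x in s, f x * h (T x) := step1
    _ = ∫ x, f x * h (T x) := step2
    _ = ∫ x, g x * h x := by rw [← key3, ← key2, key1]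
    _ = ∫ x, g x * Real.log (g x / f x) := rfl
end

section
/- Suppose for all probability measures ν ≪ μ on a unit cube Q ⊂ ℝⁿ we have W₂²(μ, ν) ≤ (40/9) R² D(ν || μ), where R ≥ 1. Then for any measurable A ⊆ ℝⁿ with μ(A) ≥ 1/2 and any t > 0, μ(A + tBⁿ) ≥ 1 − exp(−t²/(9R²)). -/
open Set MeasureTheory

/-! Marton's argument. Let `B` be the complement of the open `t`-thickening of `A`, with
`μ B > 0`. The conditioned measure `μ[|B]` has density `𝟙_B / μ B`, of relative entropy
`-log μ B`. A coupling of `μ` and `μ[|B]` moves the mass of `A`, at least `1/2`, by at least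
`t`, so its cost is at least `t² / 2`, and the transportation-cost inequality gives
`t² / 2 ≤ (40/9) R² (-log μ B)`, i.e. `μ B ≤ exp (-9t² / (80R²)) ≤ exp (-t² / (9R²))`. -/

open ProbabilityTheory Metric Real

theorem EuclideanSpace.isBounded_setOf_forall_mem_Icc {ι : Type*} [Fintype ι] (a b : ι → ℝ) :
    Bornology.IsBounded {x : EuclideanSpace ℝ ι | ∀ i, x i ∈ Icc (a i) (b i)} := by
  have hbox := Bornology.isBounded_pi.2 (Or.inr fun i => isBounded_Icc (a i) (b i))
  simpa [Set.preimage, Set.pi] using (PiLp.antilipschitzWith_ofLp 2 _).isBounded_preimage hbox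

theorem le_dist_of_mem_of_notMem_thickening {X : Type*} [PseudoMetricSpace X] {A : Set X}
    {t : ℝ} {x y : X} (hx : x ∈ A) (hy : y ∉ thickening t A) : t ≤ dist x y :=
  dist_comm y x ▸ not_lt.1 fun h ↦ hy (mem_thickening_iff.2 ⟨x, hx, h⟩)

section Coupling

variable {X : Type*} [PseudoMetricSpace X] [MeasurableSpace X] {γ : Measure (X × X)}
  [IsFiniteMeasure γ]

theorem integrable_dist_sq_of_ae_mem [OpensMeasurableSpace X] [SecondCountableTopology X]
    {S : Set X} (hS : Bornology.IsBounded S) (h₁ : ∀ᵐ p ∂γ, p.1 ∈ S) (h₂ : ∀ᵐ p ∂γ, p.2 ∈ S) :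
    Integrable (fun p : X × X => dist p.1 p.2 ^ 2) γ := by
  refine (integrable_const (diam S ^ 2)).mono' (by fun_prop) ?_
  filter_upwards [h₁, h₂] with p hp₁ hp₂
  rw [norm_of_nonneg (by positivity)]
  exact pow_le_pow_left₀ dist_nonneg (dist_le_diam_of_mem hS hp₁ hp₂) 2

theorem mul_measureReal_le_integral_dist_sq {μ : Measure X} (hγ : γ.map Prod.fst = μ)
    {A B : Set X} (hA : MeasurableSet A) {t : ℝ} (ht : 0 ≤ t)
    (hAB : ∀ x ∈ A, ∀ y ∈ B, t ≤ dist x y) (hB : ∀ᵐ p ∂γ, p.2 ∈ B)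
    (hint : Integrable (fun p : X × X => dist p.1 p.2 ^ 2) γ) :
    t ^ 2 * μ.real A ≤ ∫ p, dist p.1 p.2 ^ 2 ∂γ := by
  have hA' : MeasurableSet (Prod.fst ⁻¹' A : Set (X × X)) := measurable_fst hA
  have hcost : ∀ᵐ p ∂γ.restrict (Prod.fst ⁻¹' A), t ^ 2 ≤ dist p.1 p.2 ^ 2 := by
    rw [ae_restrict_iff' hA']
    filter_upwards [hB] with p hp₂ hp₁
    exact pow_le_pow_left₀ ht (hAB _ hp₁ _ hp₂) 2
  calc t ^ 2 * μ.real A = ∫ _ in Prod.fst ⁻¹' A, t ^ 2 ∂γ := by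
        rw [setIntegral_const, smul_eq_mul, mul_comm, measureReal_def, measureReal_def,
          ← Measure.map_apply measurable_fst hA, hγ]
    _ ≤ ∫ p in Prod.fst ⁻¹' A, dist p.1 p.2 ^ 2 ∂γ :=
        integral_mono_ae (integrable_const _) hint.restrict hcost
    _ ≤ ∫ p, dist p.1 p.2 ^ 2 ∂γ :=
        setIntegral_le_integral hint (.of_forall fun _ => by positivity)

end Coupling

namespace MeasureTheory.Measure

variable {X : Type*} [MeasurableSpace X] {μ : Measure X} {B : Set X}

noncomputable def condDensity (μ : Measure X) (B : Set X) : X → ℝ :=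
  B.indicator fun _ => (μ.real B)⁻¹

theorem condDensity_nonneg (x : X) : 0 ≤ μ.condDensity B x :=
  indicator_nonneg (fun _ _ => by positivity) x

theorem integrable_condDensity [IsFiniteMeasure μ] (hB : MeasurableSet B) :
    Integrable (μ.condDensity B) μ :=
  (integrable_const _).indicator hB

theorem condDensity_mul_log :
    (fun x => μ.condDensity B x * log (μ.condDensity B x)) =
      B.indicator fun _ => (μ.real B)⁻¹ * log (μ.real B)⁻¹ := by
  ext x
  by_cases hx : x ∈ B <;> simp [condDensity, hx]

theorem integrable_condDensity_mul_log [IsFiniteMeasure μ] (hB : MeasurableSet B) :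
    Integrable (fun x => μ.condDensity B x * log (μ.condDensity B x)) μ := by
  rw [condDensity_mul_log]
  exact (integrable_const _).indicator hB

theorem integral_condDensity_mul_log (hB : MeasurableSet B) :
    ∫ x, μ.condDensity B x * log (μ.condDensity B x) ∂μ = -log (μ.real B) := by
  rw [condDensity_mul_log, integral_indicator_const _ hB, smul_eq_mul, log_inv, ← mul_assoc]
  rcases eq_or_ne (μ.real B) 0 with h | h
  · simp [h]
  · rw [mul_inv_cancel₀ h, one_mul]

theorem withDensity_ofReal_condDensity [IsFiniteMeasure μ] (hB : MeasurableSet B)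
    (hμB : μ B ≠ 0) :
    μ.withDensity (fun x => ENNReal.ofReal (μ.condDensity B x)) = μ[|B] := by
  have : (fun x => ENNReal.ofReal (μ.condDensity B x)) = B.indicator fun _ => (μ B)⁻¹ := by
    ext x
    by_cases hx : x ∈ B <;> simp [condDensity, hx, measureReal_def,
      ENNReal.ofReal_inv_of_pos (ENNReal.toReal_pos hμB (measure_ne_top μ B))]
  rw [this, withDensity_indicator hB, withDensity_const]
  rfl

end MeasureTheory.Measure

theorem le_exp_of_half_sq_le_mul_neg_log {s t R : ℝ} (hs₀ : 0 < s) (hs₁ : s ≤ 1)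
    (h : t ^ 2 / 2 ≤ 40 / 9 * R ^ 2 * -log s) : s ≤ exp (-t ^ 2 / (9 * R ^ 2)) := by
  rw [← exp_log hs₀, exp_le_exp]
  rcases eq_or_ne R 0 with rfl | hR
  -- the exponent is the junk value `-t ^ 2 / 0 = 0`
  · simpa using log_nonpos hs₀.le hs₁
  · rw [le_div_iff₀ (by positivity)]
    nlinarith [sq_nonneg t]

theorem concentration_from_transport_cost_general (n : ℕ) (R : ℝ)
    (μ : Measure (EuclideanSpace ℝ (Fin n))) [IsProbabilityMeasure μ]
    (a : Fin n → ℝ)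
    (hQ : μ {x : EuclideanSpace ℝ (Fin n) | ∀ i, x i ∈ Icc (a i) (a i + 1)} = 1)
    -- quadratic transportation-cost inequality W₂²(μ,ν) ≤ (40/9) R² D(ν‖μ)
    (htc : ∀ g : EuclideanSpace ℝ (Fin n) → ℝ, (∀ x, 0 ≤ g x) →
      Integrable g μ → Integrable (fun x => g x * Real.log (g x)) μ →
      IsProbabilityMeasure (μ.withDensity (fun x => ENNReal.ofReal (g x))) →
      ∃ γ : Measure (EuclideanSpace ℝ (Fin n) × EuclideanSpace ℝ (Fin n)),
        IsProbabilityMeasure γ ∧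
        γ.map Prod.fst = μ ∧
        γ.map Prod.snd = μ.withDensity (fun x => ENNReal.ofReal (g x)) ∧
        ∫ p, dist p.1 p.2 ^ 2 ∂γ ≤ (40 / 9) * R ^ 2 * ∫ x, g x * Real.log (g x) ∂μ) :
    ∀ A : Set (EuclideanSpace ℝ (Fin n)), MeasurableSet A →
      (1 : ℝ) / 2 ≤ (μ A).toReal → ∀ t : ℝ, 0 < t →
      1 - Real.exp (-t ^ 2 / (9 * R ^ 2)) ≤
        (μ {x | ∃ y ∈ A, dist x y ≤ t}).toReal := by
  intro A hA hAhalf t ht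
  set B := (thickening t A)ᶜ
  have hB : MeasurableSet B := isOpen_thickening.measurableSet.compl
  suffices hBexp : μ.real B ≤ exp (-t ^ 2 / (9 * R ^ 2)) by
    have hsub : thickening t A ⊆ {x | ∃ y ∈ A, dist x y ≤ t} := fun x hx ↦
      let ⟨y, hy, hxy⟩ := mem_thickening_iff.1 hx; ⟨y, hy, hxy.le⟩
    rw [probReal_compl_eq_one_sub isOpen_thickening.measurableSet] at hBexp
    show _ ≤ μ.real _
    linarith [measureReal_mono (μ := μ) hsub]
  rcases measureReal_nonneg.eq_or_lt with hB₀ | hBpos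
  · exact hB₀ ▸ (exp_pos _).le
  have hμB : μ B ≠ 0 := fun h ↦ hBpos.ne' (by simp [measureReal_def, h])
  obtain ⟨γ, hγ, h₁, h₂, hcost⟩ := htc (μ.condDensity B) Measure.condDensity_nonneg
    (Measure.integrable_condDensity hB) (Measure.integrable_condDensity_mul_log hB)
    (by rw [Measure.withDensity_ofReal_condDensity hB hμB]; exact cond_isProbabilityMeasure hμB)
  rw [Measure.withDensity_ofReal_condDensity hB hμB] at h₂
  rw [Measure.integral_condDensity_mul_log hB] at hcost
  set Q := {x : EuclideanSpace ℝ (Fin n) | ∀ i, x i ∈ Icc (a i) (a i + 1)}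
  have hQae : ∀ᵐ x ∂μ, x ∈ Q :=
    (ae_mem_iff_measure_eq (by measurability)).2 (by rw [hQ, measure_univ])
  have hint := integrable_dist_sq_of_ae_mem
    (EuclideanSpace.isBounded_setOf_forall_mem_Icc a (a · + 1))
    (ae_of_ae_map measurable_fst.aemeasurable (h₁ ▸ hQae))
    (ae_of_ae_map measurable_snd.aemeasurable (h₂ ▸ cond_absolutelyContinuous.ae_le hQae))
  have hmarton := mul_measureReal_le_integral_dist_sq h₁ hA ht.le
    (fun _ hx _ hy ↦ le_dist_of_mem_of_notMem_thickening hx hy)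
    (ae_of_ae_map measurable_snd.aemeasurable (h₂ ▸ ae_cond_mem hB)) hint
  refine le_exp_of_half_sq_le_mul_neg_log hBpos measureReal_le_one ?_
  calc t ^ 2 / 2 = t ^ 2 * (1 / 2) := by ring
    _ ≤ t ^ 2 * μ.real A := mul_le_mul_of_nonneg_left hAhalf (sq_nonneg t)
    _ ≤ 40 / 9 * R ^ 2 * -log (μ.real B) := hmarton.trans hcost

theorem concentration_from_transport_cost (n : ℕ) (R : ℝ) (hR : 1 ≤ R)
    (μ : Measure (EuclideanSpace ℝ (Fin n))) [IsProbabilityMeasure μ]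
    (a : Fin n → ℝ)
    (hQ : μ {x : EuclideanSpace ℝ (Fin n) | ∀ i, x i ∈ Icc (a i) (a i + 1)} = 1)
    -- quadratic transportation-cost inequality W₂²(μ,ν) ≤ (40/9) R² D(ν‖μ)
    (htc : ∀ g : EuclideanSpace ℝ (Fin n) → ℝ, (∀ x, 0 ≤ g x) →
      Integrable g μ → Integrable (fun x => g x * Real.log (g x)) μ →
      IsProbabilityMeasure (μ.withDensity (fun x => ENNReal.ofReal (g x))) →
      ∃ γ : Measure (EuclideanSpace ℝ (Fin n) × EuclideanSpace ℝ (Fin n)),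
        IsProbabilityMeasure γ ∧
        γ.map Prod.fst = μ ∧
        γ.map Prod.snd = μ.withDensity (fun x => ENNReal.ofReal (g x)) ∧
        ∫ p, dist p.1 p.2 ^ 2 ∂γ ≤ (40 / 9) * R ^ 2 * ∫ x, g x * Real.log (g x) ∂μ) :
    ∀ A : Set (EuclideanSpace ℝ (Fin n)), MeasurableSet A →
      (1 : ℝ) / 2 ≤ (μ A).toReal → ∀ t : ℝ, 0 < t →
      1 - Real.exp (-t ^ 2 / (9 * R ^ 2)) ≤
        (μ {x | ∃ y ∈ A, dist x y ≤ t}).toReal :=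
  concentration_from_transport_cost_general n R μ a hQ htc
end
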